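/- arXiv:2409.18080 — 4 statements merged into one kernel-verified Lean document; each statement's English description precedes it below -/
import Mathlib

section
/- Let K = ℚ(√D) with D ≥ 2 squarefree, (β_j)_{j∈ℤ} the ordered sequence of indecomposables with v_jβ_j = β_{j-1} + β_{j+1}, and α = e β_j + f β_{j+1} with e ≥ 1, f ≥ 0. Suppose v_j ≤ e ≤ 2v_j - 1, 0 ≤ f ≤ v_{j+1} - 2, and (e,f) ≠ (2v_j-1, v_{j+1}-2), (v_{j-1}, e) ≠ (2, 2v_j-1), (v_{j-1}, e, f) ≠ (2, 2v_j-2, v_{j+1}-2). Then α has exactly 2 partitions into indecomposable parts, namely e β_j + f β_{j+1} and β_{j-1} + (e - v_j)β_j + (f+1)β_{j+1}. -/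
/-!
A partition of `α` into indecomposables is a multiset of indices `k` with multiplicities `c k`
and `∑ c k • β k = α`. Since consecutive `β`'s are linearly independent (compare the two
embeddings), summation by parts shows that every relation `∑ d k • β k = 0` is a combination
`∑ n m • (δ (m - 1) + δ (m + 1) - v m • δ m)` of the Hejda–Kala relations. So the partitions
correspond to the finitely supported `n` with `e • δ j + f • δ (j + 1) + (that combination) ≥ 0`.
Away from `j` and `j + 1` this reads `v k * n k ≤ n (k - 1) + n (k + 1)`, which with `v k ≥ 2`
forces `n` to be nonnegative and to decrease strictly, while positive, as `k` moves away from `j`.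
The three inequalities at `j - 1`, `j`, `j + 1` then leave only `n = 0` and `n = δ j`, the two
listed partitions, once the excluded cases are ruled out.
-/

noncomputable section

/-- `ω_D`: the standard generator of the ring of integers of `ℚ(√D)`. -/
def omegaD (D : ℕ) : ℝ := if D % 4 = 1 then (1 + Real.sqrt D) / 2 else Real.sqrt D

/-- The Galois conjugate of `ω_D`. -/
def omegaD' (D : ℕ) : ℝ := if D % 4 = 1 then (1 - Real.sqrt D) / 2 else -Real.sqrt D

/-- Elements of `O_K` in coordinates: `(x, y)` represents `x + y·ω_D`. -/
abbrev OK : Type := ℤ × ℤ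

/-- First real embedding. -/
def emb1 (D : ℕ) (a : OK) : ℝ := a.1 + a.2 * omegaD D

/-- Second real embedding (Galois conjugate). -/
def emb2 (D : ℕ) (a : OK) : ℝ := a.1 + a.2 * omegaD' D

/-- Galois conjugation on `O_K`. -/
def conjOK (D : ℕ) (a : OK) : OK := (a.1 + (if D % 4 = 1 then (1 : ℤ) else 0) * a.2, -a.2)

/-- Total positivity. -/
def TotPos (D : ℕ) (a : OK) : Prop := 0 < emb1 D a ∧ 0 < emb2 D a

/-- The field norm. -/
def Nm (D : ℕ) (a : OK) : ℝ := emb1 D a * emb2 D a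

/-- Indecomposability: totally positive and not a sum of two totally positive elements. -/
def Indec (D : ℕ) (a : OK) : Prop :=
  TotPos D a ∧ ¬ ∃ b c : OK, TotPos D b ∧ TotPos D c ∧ a = b + c

/-- Number of partitions of `α` into indecomposable parts (`p_K(α|I)`). -/
def pKI (D : ℕ) (α : OK) : ℕ :=
  Set.ncard {s : Multiset OK | (∀ x ∈ s, Indec D x) ∧ s.sum = α}

/-- Number of partitions of `α` into totally positive parts (`p_K(α)`). -/
def pK (D : ℕ) (α : OK) : ℕ :=
  Set.ncard {s : Multiset OK | (∀ x ∈ s, TotPos D x) ∧ s.sum = α}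

/-- Discriminant of `ℚ(√D)`. -/
def disc (D : ℕ) : ℕ := if D % 4 = 1 then D else 4 * D

/-- The ordered two-sided sequence of indecomposables together with
the coefficients `v j ≥ 2` from the Hejda–Kala relation `v_j β_j = β_{j-1} + β_{j+1}`. -/
structure BetaSeq (D : ℕ) (β : ℤ → OK) (v : ℤ → ℤ) : Prop where
  indec : ∀ j, Indec D (β j)
  surj : ∀ a : OK, Indec D a → ∃ j, β j = a
  mono : StrictMono fun j => emb1 D (β j)
  zero : β 0 = (1, 0)
  conj_eq : ∀ j, β (-j) = conjOK D (β j)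
  v_two_le : ∀ j, 2 ≤ v j
  v_symm : ∀ j, v (-j) = v j
  rel : ∀ j, v j • β j = β (j - 1) + β (j + 1)

/-- The continued fraction data of `ω_D = [⌈u₀/2⌉, \overline{u₁, …, u_s}]` (with `u_s = u_0`),
with tails `γ_0 = ω_D`, `γ_i = [u_i, u_{i+1}, …]` for `i ≥ 1`. -/
structure CFData (D : ℕ) (u : ℕ → ℕ) (γ : ℕ → ℝ) : Prop where
  gamma_zero : γ 0 = omegaD D
  u_zero : (u 0 : ℤ) = 2 * ⌊omegaD D⌋ - (if D % 4 = 1 then 1 else 0)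
  head : omegaD D = (⌊omegaD D⌋ : ℝ) + 1 / γ 1
  step : ∀ i, 1 ≤ i → γ i = u i + 1 / γ (i + 1)
  one_lt : ∀ i, 1 ≤ i → 1 < γ i
  floor_eq : ∀ i, 1 ≤ i → (u i : ℤ) = ⌊γ i⌋
  period : ∃ s, 1 ≤ s ∧ u s = u 0 ∧ ∀ i, 1 ≤ i → u (i + s) = u i

/-- The convergents `α_i = p_i + q_i ξ_D`, indexed by `i ≥ -1`. -/
structure ConvData (D : ℕ) (u : ℕ → ℕ) (a : ℤ → OK) : Prop where
  neg_one : a (-1) = (1, 0)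
  zero : a 0 = (⌊omegaD D⌋, 0) + (if D % 4 = 1 then ((-1 : ℤ), (1 : ℤ)) else (0, 1))
  recur : ∀ i : ℤ, -1 ≤ i → a (i + 2) = (u (i + 2).toNat : ℤ) • a (i + 1) + a i

/-- Semiconvergents `α_{i,r} = α_i + r·α_{i+1}`. -/
def semiconv (a : ℤ → OK) (i r : ℤ) : OK := a i + r • a (i + 1)

lemma emb1_zsmul (D : ℕ) (z : ℤ) (x : OK) : emb1 D (z • x) = z * emb1 D x := by
  simp only [emb1, Prod.smul_fst, Prod.smul_snd, smul_eq_mul]; push_cast; ring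

lemma emb2_zsmul (D : ℕ) (z : ℤ) (x : OK) : emb2 D (z • x) = z * emb2 D x := by
  simp only [emb2, Prod.smul_fst, Prod.smul_snd, smul_eq_mul]; push_cast; ring

lemma emb1_conjOK (D : ℕ) (a : OK) : emb1 D (conjOK D a) = emb2 D a := by
  by_cases h : D % 4 = 1 <;> simp [emb1, emb2, conjOK, omegaD, omegaD', h]; ring

namespace BetaSeq

variable {D : ℕ} {β : ℤ → OK} {v : ℤ → ℤ}

lemma injective (hβ : BetaSeq D β v) : Function.Injective β :=
  Function.Injective.of_comp (f := emb1 D) hβ.mono.injective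

lemma strictAnti_emb2 (hβ : BetaSeq D β v) : StrictAnti fun k => emb2 D (β k) := fun k l h => by
  simpa only [← emb1_conjOK, ← hβ.conj_eq] using hβ.mono (neg_lt_neg h)

/-- `β k / β (k + 1)` is `< 1` in the first embedding and `> 1` in the second. -/
lemma eq_zero_of_smul_eq_smul_succ (hβ : BetaSeq D β v) {k x y : ℤ}
    (h : x • β k = y • β (k + 1)) : x = 0 ∧ y = 0 := by
  have h1 := congrArg (emb1 D) h
  have h2 := congrArg (emb2 D) h
  simp only [emb1_zsmul, emb2_zsmul] at h1 h2
  set b₀ := emb1 D (β k)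
  set b₁ := emb1 D (β (k + 1))
  set c₀ := emb2 D (β k)
  set c₁ := emb2 D (β (k + 1))
  have hb : b₀ < b₁ := hβ.mono (lt_add_one k)
  have hc : c₁ < c₀ := hβ.strictAnti_emb2 (lt_add_one k)
  have hdet : 0 < b₁ * c₀ - b₀ * c₁ := by nlinarith [(hβ.indec k).1.1, (hβ.indec (k + 1)).1.2]
  have hx : (x : ℝ) * (b₁ * c₀ - b₀ * c₁) = 0 := by linear_combination b₁ * h2 - c₁ * h1
  obtain rfl : x = 0 := by exact_mod_cast (mul_eq_zero.mp hx).resolve_right hdet.ne'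
  have hb₁ : 0 < b₁ := (hβ.indec (k + 1)).1.1
  exact ⟨rfl, by simpa [hb₁.ne'] using h1.symm⟩

end BetaSeq

/-- `relComb v n = ∑ₘ n m • (δ_{m-1} + δ_{m+1} - v m • δ_m)`: the combination, with coefficients
`n`, of the relations `β (m - 1) + β (m + 1) - v m • β m = 0`. -/
def relComb (v n : ℤ → ℤ) (k : ℤ) : ℤ := n (k - 1) + n (k + 1) - v k * n k

/-- `relPrimitiveAux v d lo i` is the value at `lo + i - 1` of the solution of
`relComb v n = d` that vanishes at `lo - 1` and `lo`. -/
def relPrimitiveAux (v d : ℤ → ℤ) (lo : ℤ) : ℕ → ℤ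
  | 0 => 0
  | 1 => 0
  | i + 2 => d (lo + i) + v (lo + i) * relPrimitiveAux v d lo (i + 1) - relPrimitiveAux v d lo i

def relPrimitive (v d : ℤ → ℤ) (lo k : ℤ) : ℤ := relPrimitiveAux v d lo (k + 1 - lo).toNat

lemma relPrimitive_of_le (v d : ℤ → ℤ) {lo k : ℤ} (hk : k ≤ lo) : relPrimitive v d lo k = 0 := by
  obtain h | h : (k + 1 - lo).toNat = 0 ∨ (k + 1 - lo).toNat = 1 := by omega
  all_goals simp only [relPrimitive, h, relPrimitiveAux]

lemma relPrimitive_add_one (v d : ℤ → ℤ) {lo k : ℤ} (hk : lo ≤ k) :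
    relPrimitive v d lo (k + 1) =
      d k + v k * relPrimitive v d lo k - relPrimitive v d lo (k - 1) := by
  obtain ⟨i, rfl⟩ : ∃ i : ℕ, k = lo + i := ⟨(k - lo).toNat, by omega⟩
  have h2 : (lo + i + 1 + 1 - lo).toNat = i + 2 := by omega
  have h1 : (lo + i + 1 - lo).toNat = i + 1 := by omega
  have h0 : (lo + i - 1 + 1 - lo).toNat = i := by omega
  simp only [relPrimitive, h0, h1, h2, relPrimitiveAux]

lemma relComb_relPrimitive (v : ℤ → ℤ) {d : ℤ → ℤ} {lo : ℤ} (hd : ∀ k < lo, d k = 0) :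
    relComb v (relPrimitive v d lo) = d := by
  funext k
  rcases le_or_gt lo k with hk | hk
  · rw [relComb, relPrimitive_add_one v d hk]; ring
  · rw [relComb, hd k hk, relPrimitive_of_le v d (by omega : k - 1 ≤ lo),
      relPrimitive_of_le v d (by omega : k + 1 ≤ lo), relPrimitive_of_le v d hk.le]
    ring

namespace BetaSeq

variable {D : ℕ} {β : ℤ → OK} {v : ℤ → ℤ}

/-- Summation by parts against the relations `v k • β k = β (k - 1) + β (k + 1)`. -/
lemma sum_Icc_relComb_smul (hβ : BetaSeq D β v) {n : ℤ → ℤ} {lo : ℤ}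
    (hn : ∀ k ≤ lo, n k = 0) {K : ℤ} (hK : lo - 1 ≤ K) :
    ∑ k ∈ Finset.Icc lo K, relComb v n k • β k = n (K + 1) • β K - n K • β (K + 1) := by
  induction K, hK using Int.leInduction with
  | base => simp [hn lo le_rfl, hn (lo - 1) (by omega)]
  | succ K hK ih =>
    rw [← Finset.insert_Icc_right_eq_Icc_add_one (by omega),
      Finset.sum_insert (by simp), ih, relComb]
    have hrel := hβ.rel (K + 1)
    simp only [add_sub_cancel_right] at hrel ⊢
    linear_combination (norm := module) -(n (K + 1) • hrel)

lemma exists_relComb_eq (hβ : BetaSeq D β v) {d : ℤ → ℤ} {lo hi : ℤ}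
    (hlo : ∀ k < lo, d k = 0) (hhi : ∀ k, hi < k → d k = 0)
    (hsum : ∑ k ∈ Finset.Icc lo hi, d k • β k = 0) :
    ∃ n : ℤ → ℤ, (∀ k ≤ lo, n k = 0) ∧ (∀ k, hi ≤ k → n k = 0) ∧ relComb v n = d := by
  set n := relPrimitive v d lo
  have hn : ∀ k ≤ lo, n k = 0 := fun k hk => relPrimitive_of_le v d hk
  have hcomb : relComb v n = d := relComb_relPrimitive v hlo
  refine ⟨n, hn, fun K hK => ?_, hcomb⟩
  rcases lt_or_ge K lo with hKlo | hKlo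
  · exact hn K hKlo.le
  have hsumK : ∑ k ∈ Finset.Icc lo K, d k • β k = 0 := by
    rw [← hsum]
    refine (Finset.sum_subset (Finset.Icc_subset_Icc_right hK) fun k hk hk' => ?_).symm
    rw [hhi k (by simp only [Finset.mem_Icc] at hk hk'; omega), zero_smul]
  rw [← hcomb, hβ.sum_Icc_relComb_smul hn (by omega), sub_eq_zero] at hsumK
  exact (hβ.eq_zero_of_smul_eq_smul_succ hsumK).2

end BetaSeq

section Tail

variable {w m : ℕ → ℤ}

lemma sub_le_sub_of_mul_le_add (hw : ∀ i, 2 ≤ w i)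
    (hm : ∀ i, w i * m (i + 1) ≤ m i + m (i + 2)) {i : ℕ} (hi : 0 ≤ m (i + 1)) :
    m (i + 1) - m i ≤ m (i + 2) - m (i + 1) := by
  nlinarith [hw i, hm i]

lemma nonneg_and_succ_le_of_mul_le_add (hw : ∀ i, 2 ≤ w i)
    (hm : ∀ i, w i * m (i + 1) ≤ m i + m (i + 2)) {N : ℕ} (hN : ∀ i, N ≤ i → m i = 0) (i : ℕ) :
    0 ≤ m i ∧ m (i + 1) ≤ m i := by
  obtain ⟨k, hk⟩ : ∃ k, N ≤ i + k := ⟨N, by omega⟩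
  induction k generalizing i with
  | zero => simp [hN i hk, hN (i + 1) (by omega)]
  | succ k ih =>
    obtain ⟨hpos, hle⟩ : 0 ≤ m (i + 1) ∧ m (i + 2) ≤ m (i + 1) := ih (i + 1) (by omega)
    have := sub_le_sub_of_mul_le_add hw hm hpos
    exact ⟨by omega, by omega⟩

lemma eq_zero_of_le_succ_of_mul_le_add (hw : ∀ i, 2 ≤ w i)
    (hm : ∀ i, w i * m (i + 1) ≤ m i + m (i + 2)) {N : ℕ} (hN : ∀ i, N ≤ i → m i = 0) {i : ℕ}
    (hi : m i ≤ m (i + 1)) : m i = 0 := by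
  have hup : ∀ k, m i ≤ m (i + k) ∧ m (i + k) ≤ m (i + k + 1) := by
    intro k
    induction k with
    | zero => exact ⟨le_rfl, hi⟩
    | succ k ih =>
      have := sub_le_sub_of_mul_le_add (i := i + k) hw hm
        (nonneg_and_succ_le_of_mul_le_add hw hm hN _).1
      show m i ≤ m (i + k + 1) ∧ m (i + k + 1) ≤ m (i + k + 2)
      omega
  have hle := (hup N).1
  rw [hN (i + N) (by omega)] at hle
  linarith [(nonneg_and_succ_le_of_mul_le_add hw hm hN i).1]

end Tail

lemma tail_of_mul_le_add {v n : ℤ → ℤ} {a hi : ℤ} (hv : ∀ k, 2 ≤ v k)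
    (hhi : ∀ k, hi ≤ k → n k = 0) (hn : ∀ k, a < k → v k * n k ≤ n (k - 1) + n (k + 1)) :
    0 ≤ n a ∧ (0 < n a → n (a + 1) < n a) ∧ (n a = 0 → ∀ k, a ≤ k → n k = 0) := by
  set m : ℕ → ℤ := fun i => n (a + i)
  have hw : ∀ i : ℕ, 2 ≤ v (a + 1 + i) := fun i => hv _
  have hm : ∀ i : ℕ, v (a + 1 + i) * m (i + 1) ≤ m i + m (i + 2) := by
    intro i
    have := hn (a + 1 + i) (by omega)
    simp only [m]; push_cast
    convert this using 3 <;> ring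
  obtain ⟨N, hN⟩ : ∃ N : ℕ, ∀ i, N ≤ i → m i = 0 :=
    ⟨(hi - a).toNat, fun i hNi => hhi _ (by omega)⟩
  have hmono := nonneg_and_succ_le_of_mul_le_add hw hm hN
  refine ⟨by simpa [m] using (hmono 0).1, fun hpos => ?_, fun hzero k hk => ?_⟩
  · refine lt_of_le_of_ne (by simpa [m] using (hmono 0).2) fun h => hpos.ne' ?_
    simpa [m] using eq_zero_of_le_succ_of_mul_le_add (i := 0) hw hm hN (by simp [m, h])
  · have hanti : Antitone m := antitone_nat_of_succ_le fun i => (hmono i).2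
    have hle := hanti (Nat.zero_le (k - a).toNat)
    have hge := (hmono (k - a).toNat).1
    simp only [m, show a + ((k - a).toNat : ℤ) = k by omega, Nat.cast_zero, add_zero,
      hzero] at hle hge
    omega

lemma false_of_local_coeffs_pos {a₀ a b e f p q r : ℤ} (ha₀ : 2 ≤ a₀) (ha : 2 ≤ a) (hb : 2 ≤ b)
    (he : e ≤ 2 * a - 1) (hf : f ≤ b - 2)
    (h4 : ¬(e = 2 * a - 1 ∧ f = b - 2)) (h5 : ¬(a₀ = 2 ∧ e = 2 * a - 1))
    (h6 : ¬(a₀ = 2 ∧ e = 2 * a - 2 ∧ f = b - 2))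
    (hp : 0 < p) (hr : 0 < r) (hpq : a₀ * p + 1 ≤ p + q) (hrq : b * r + 1 ≤ f + q + r)
    (hq : a * q ≤ p + r + e) (hpq' : p + 1 ≤ q) (hrq' : r + 1 ≤ q) : False := by
  rcases (show a = 2 ∨ 3 ≤ a by omega) with rfl | ha3
  · rcases (show a₀ = 2 ∨ 3 ≤ a₀ by omega) with rfl | ha₀3
    · have he2 : e ≤ 2 := by omega
      have hfb : f ≤ b - 3 := by omega
      nlinarith
    · have : 2 * p + 1 ≤ q := by nlinarith
      obtain ⟨rfl, rfl, rfl, rfl⟩ : q = 3 ∧ p = 1 ∧ r = 2 ∧ e = 3 := by omega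
      omega
  · have hq3 : (a - 2) * (q - 2) ≤ 1 := by nlinarith
    rcases (show q = 2 ∨ 3 ≤ q by omega) with rfl | hq3'
    · obtain ⟨rfl, rfl⟩ : p = 1 ∧ r = 1 := by omega
      omega
    · obtain ⟨rfl, rfl⟩ : a = 3 ∧ q = 3 := by constructor <;> nlinarith
      obtain ⟨rfl, rfl⟩ : p = 2 ∧ r = 2 := by omega
      omega

/-- The inequalities at `j - 1`, `j`, `j + 1`, with `(p, q, r) = (n (j - 1), n j, n (j + 1))`
and `(a₀, a, b) = (v (j - 1), v j, v (j + 1))`; `hpq` and `hrq` already use the strict decrease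
of `n` away from `j`. -/
lemma local_coeffs_bound {a₀ a b e f p q r : ℤ} (ha₀ : 2 ≤ a₀) (ha : 2 ≤ a) (hb : 2 ≤ b)
    (he : e ≤ 2 * a - 1) (hf : f ≤ b - 2)
    (h4 : ¬(e = 2 * a - 1 ∧ f = b - 2)) (h5 : ¬(a₀ = 2 ∧ e = 2 * a - 1))
    (h6 : ¬(a₀ = 2 ∧ e = 2 * a - 2 ∧ f = b - 2))
    (hp : 0 ≤ p) (hr : 0 ≤ r)
    (hpq : 0 < p → a₀ * p + 1 ≤ p + q) (hrq : 0 < r → b * r + 1 ≤ f + q + r)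
    (hq : a * q ≤ p + r + e) : q ≤ 1 ∧ p = 0 ∧ r = 0 := by
  have hpq' : 0 < p → p + 1 ≤ q := fun h => by nlinarith [hpq h]
  have hrq' : 0 < r → r + 1 ≤ q := fun h => by nlinarith [hrq h]
  suffices q ≤ 1 by omega
  by_contra! hq2
  have key : a * (q - 2) + 1 ≤ p + r := by linarith
  rcases hp.eq_or_lt with rfl | hp <;> rcases hr.eq_or_lt with rfl | hr
  · nlinarith
  · obtain ⟨rfl, rfl⟩ : q = 2 ∧ r = 1 := by
      have := hrq' hr; constructor <;> nlinarith
    have := hrq hr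
    omega
  · obtain ⟨rfl, rfl⟩ : q = 2 ∧ p = 1 := by
      have := hpq' hp; constructor <;> nlinarith
    have := hpq hp
    omega
  · exact false_of_local_coeffs_pos ha₀ ha hb he hf h4 h5 h6 hp hr (hpq hp) (hrq hr) hq
      (hpq' hp) (hrq' hr)

lemma eq_zero_or_eq_single_of_nonneg {v n : ℤ → ℤ} {j e f lo hi : ℤ} (hv : ∀ k, 2 ≤ v k)
    (hlo : ∀ k ≤ lo, n k = 0) (hhi : ∀ k, hi ≤ k → n k = 0)
    (hnn : ∀ k, 0 ≤ (Pi.single j e + Pi.single (j + 1) f : ℤ → ℤ) k + relComb v n k)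
    (h2 : e ≤ 2 * v j - 1) (h3 : f ≤ v (j + 1) - 2)
    (h4 : ¬(e = 2 * v j - 1 ∧ f = v (j + 1) - 2))
    (h5 : ¬(v (j - 1) = 2 ∧ e = 2 * v j - 1))
    (h6 : ¬(v (j - 1) = 2 ∧ e = 2 * v j - 2 ∧ f = v (j + 1) - 2)) :
    n = 0 ∨ n = Pi.single j 1 := by
  have hout : ∀ k, k ≠ j → k ≠ j + 1 → v k * n k ≤ n (k - 1) + n (k + 1) := by
    intro k hkj hkj1
    have := hnn k
    simp only [Pi.add_apply, Pi.single_apply, hkj, hkj1, if_false, relComb] at this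
    omega
  obtain ⟨hr, hrq, hrz⟩ := tail_of_mul_le_add (a := j + 1) hv hhi
    fun k hk => hout k (by omega) (by omega)
  obtain ⟨hp, hpq, hpz⟩ := tail_of_mul_le_add (a := 1 - j) (v := fun k => v (-k))
    (n := fun k => n (-k)) (hi := -lo) (fun k => hv (-k)) (fun k hk => hlo (-k) (by omega))
    fun k hk => by
      have := hout (-k) (by omega) (by omega)
      simp only [show -(k - 1) = -k + 1 by ring, show -(k + 1) = -k - 1 by ring]
      linarith
  simp only [show -(1 - j) = j - 1 by ring, show -(1 - j + 1) = j - 2 by ring] at hp hpq hpz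
  have hjm := hnn (j - 1)
  have hj := hnn j
  have hjp := hnn (j + 1)
  simp only [relComb, Pi.add_apply, Pi.single_apply, sub_eq_self, one_ne_zero, left_eq_add,
    add_eq_left, zero_add, sub_add_cancel, add_sub_cancel_right, ↓reduceIte,
    show j - 1 - 1 = j - 2 by ring] at hjm hj hjp
  rw [if_neg (by omega)] at hjm
  obtain ⟨hq1, hp0, hr0⟩ := local_coeffs_bound (q := n j) (hv (j - 1)) (hv j) (hv (j + 1))
    h2 h3 h4 h5 h6 hp hr (fun h => by linarith [hpq h]) (fun h => by linarith [hrq h])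
    (by linarith)
  have hn : ∀ k, k ≠ j → n k = 0 := by
    intro k hk
    rcases lt_or_gt_of_ne hk with h | h
    · simpa using hpz hp0 (-k) (by omega)
    · exact hrz hr0 k (by omega)
  have hq0 : 0 ≤ n j := by
    rw [hp0, hn (j - 2) (by omega), mul_zero] at hjm
    linarith
  have hsingle : n = Pi.single j (n j) := funext fun k => by
    by_cases hk : k = j
    · subst hk; simp
    · simp [hk, hn k hk]
  rcases (by omega : n j = 0 ∨ n j = 1) with h | h <;> rw [hsingle, h] <;> simp

lemma sum_replicate_toNat {M : Type*} [AddCommGroup M] (x : M) {z : ℤ} (hz : 0 ≤ z) :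
    (Multiset.replicate z.toNat x).sum = z • x := by
  rw [Multiset.sum_replicate, ← natCast_zsmul, Int.toNat_of_nonneg hz]

namespace BetaSeq

variable {D : ℕ} {β : ℤ → OK} {v : ℤ → ℤ} {j e f : ℤ}

lemma exists_multiset_map_eq (hβ : BetaSeq D β v) {s : Multiset OK}
    (hs : ∀ x ∈ s, Indec D x) : ∃ t : Multiset ℤ, t.map β = s := by
  induction s using Multiset.induction_on with
  | empty => exact ⟨0, rfl⟩
  | cons a s ih =>
    obtain ⟨t, rfl⟩ := ih fun x hx => hs x (Multiset.mem_cons_of_mem hx)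
    obtain ⟨k, rfl⟩ := hβ.surj a (hs a (Multiset.mem_cons_self a _))
    exact ⟨k ::ₘ t, Multiset.map_cons β k t⟩

lemma count_eq_or_count_eq (hβ : BetaSeq D β v) {t : Multiset ℤ}
    (hsum : (t.map β).sum = e • β j + f • β (j + 1))
    (h2 : e ≤ 2 * v j - 1) (h3 : f ≤ v (j + 1) - 2)
    (h4 : ¬(e = 2 * v j - 1 ∧ f = v (j + 1) - 2))
    (h5 : ¬(v (j - 1) = 2 ∧ e = 2 * v j - 1))
    (h6 : ¬(v (j - 1) = 2 ∧ e = 2 * v j - 2 ∧ f = v (j + 1) - 2)) :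
    (∀ k, (t.count k : ℤ) = (Pi.single j e + Pi.single (j + 1) f : ℤ → ℤ) k) ∨
      ∀ k, (t.count k : ℤ) =
        (Pi.single j e + Pi.single (j + 1) f : ℤ → ℤ) k + relComb v (Pi.single j 1) k := by
  set c₀ : ℤ → ℤ := Pi.single j e + Pi.single (j + 1) f
  set I := insert j (insert (j + 1) t.toFinset)
  obtain ⟨lo, hlo⟩ := I.bddBelow
  obtain ⟨hi, hhi⟩ := I.bddAbove
  have hI : I ⊆ Finset.Icc lo hi := fun k hk => Finset.mem_Icc.2 ⟨hlo hk, hhi hk⟩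
  have hout : ∀ k, k ∉ Finset.Icc lo hi → (t.count k : ℤ) - c₀ k = 0 := by
    intro k hk
    have hkI : k ∉ I := fun h => hk (hI h)
    simp only [I, Finset.mem_insert, Multiset.mem_toFinset, not_or] at hkI
    simp [c₀, hkI.1, hkI.2.1, Multiset.count_eq_zero_of_notMem hkI.2.2]
  have hsum' : ∑ k ∈ Finset.Icc lo hi, ((t.count k : ℤ) - c₀ k) • β k = 0 := by
    have hcount : (t.map β).sum = ∑ k ∈ Finset.Icc lo hi, (t.count k : ℤ) • β k := by
      rw [Finset.sum_multiset_map_count, Finset.sum_subset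
        ((Finset.subset_insert _ _).trans (Finset.subset_insert _ _) |>.trans hI)
        fun k _ hk => by rw [Multiset.count_eq_zero_of_notMem (by simpa using hk), zero_smul]]
      simp only [natCast_zsmul]
    have hj : j ∈ Finset.Icc lo hi := hI (Finset.mem_insert_self _ _)
    have hj1 : j + 1 ∈ Finset.Icc lo hi :=
      hI (Finset.mem_insert_of_mem (Finset.mem_insert_self _ _))
    simp only [sub_smul, Finset.sum_sub_distrib, ← hcount, hsum, c₀]
    simp [Pi.single_apply, add_smul, Finset.sum_add_distrib, ite_smul, hj, hj1]
  obtain ⟨n, hnlo, hnhi, hn⟩ := hβ.exists_relComb_eq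
    (fun k hk => hout k (by rw [Finset.mem_Icc]; omega))
    (fun k hk => hout k (by rw [Finset.mem_Icc]; omega)) hsum'
  have hcount : ∀ k, (t.count k : ℤ) = c₀ k + relComb v n k := fun k => by rw [hn]; ring
  rcases eq_zero_or_eq_single_of_nonneg hβ.v_two_le hnlo hnhi
      (fun k => hcount k ▸ Int.natCast_nonneg _) h2 h3 h4 h5 h6 with rfl | rfl
  · left
    intro k
    simp [hcount, relComb]
  · exact Or.inr hcount

lemma sum_map_eq_iff (hβ : BetaSeq D β v) {t : Multiset ℤ} (h1 : v j ≤ e) (hf : 0 ≤ f)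
    (h2 : e ≤ 2 * v j - 1) (h3 : f ≤ v (j + 1) - 2)
    (h4 : ¬(e = 2 * v j - 1 ∧ f = v (j + 1) - 2))
    (h5 : ¬(v (j - 1) = 2 ∧ e = 2 * v j - 1))
    (h6 : ¬(v (j - 1) = 2 ∧ e = 2 * v j - 2 ∧ f = v (j + 1) - 2)) :
    (t.map β).sum = e • β j + f • β (j + 1) ↔
      t = Multiset.replicate e.toNat j + Multiset.replicate f.toNat (j + 1) ∨
      t = {j - 1} + Multiset.replicate (e - v j).toNat j +
        Multiset.replicate (f + 1).toNat (j + 1) := by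
  have hv := hβ.v_two_le j
  constructor
  · intro hsum
    rcases hβ.count_eq_or_count_eq hsum h2 h3 h4 h5 h6 with hc | hc
    · refine Or.inl (Multiset.ext.2 fun k => ?_)
      have := hc k
      simp only [Multiset.count_add, Multiset.count_replicate, Pi.add_apply,
        Pi.single_apply] at this ⊢
      split_ifs at this ⊢ <;> omega
    · refine Or.inr (Multiset.ext.2 fun k => ?_)
      have := hc k
      simp only [Multiset.count_add, Multiset.count_replicate, Multiset.count_singleton,
        Pi.add_apply, Pi.single_apply, relComb] at this ⊢
      split_ifs at this ⊢ <;> subst_vars <;> omega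
  · rintro (rfl | rfl)
    · simp only [Multiset.map_add, Multiset.map_replicate, Multiset.sum_add,
        sum_replicate_toNat _ (by omega : 0 ≤ e), sum_replicate_toNat _ hf]
    · simp only [Multiset.map_add, Multiset.map_replicate, Multiset.sum_add, Multiset.map_singleton,
        Multiset.sum_singleton, sum_replicate_toNat _ (by omega : 0 ≤ e - v j),
        sum_replicate_toNat _ (by omega : 0 ≤ f + 1)]
      linear_combination (norm := module) -hβ.rel j

lemma indec_of_mem_map (hβ : BetaSeq D β v) {t : Multiset ℤ} :
    ∀ x ∈ t.map β, Indec D x := fun x hx => by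
  obtain ⟨k, -, rfl⟩ := Multiset.mem_map.1 hx
  exact hβ.indec k

end BetaSeq

theorem stmt10_general (D : ℕ)
    (β : ℤ → OK) (v : ℤ → ℤ) (hβ : BetaSeq D β v)
    (j e f : ℤ) (hf : 0 ≤ f)
    (α : OK) (hα : α = e • β j + f • β (j + 1))
    (h1 : v j ≤ e) (h2 : e ≤ 2 * v j - 1) (h3 : f ≤ v (j + 1) - 2)
    (h4 : ¬(e = 2 * v j - 1 ∧ f = v (j + 1) - 2))
    (h5 : ¬(v (j - 1) = 2 ∧ e = 2 * v j - 1))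
    (h6 : ¬(v (j - 1) = 2 ∧ e = 2 * v j - 2 ∧ f = v (j + 1) - 2)) :
    pKI D α = 2 ∧
      {s : Multiset OK | (∀ x ∈ s, Indec D x) ∧ s.sum = α} =
        {Multiset.replicate e.toNat (β j) + Multiset.replicate f.toNat (β (j + 1)),
         {β (j - 1)} + Multiset.replicate (e - v j).toNat (β j) +
           Multiset.replicate (f + 1).toNat (β (j + 1))} := by
  subst hα
  set t₁ := Multiset.replicate e.toNat j + Multiset.replicate f.toNat (j + 1)
  set t₂ := {j - 1} + Multiset.replicate (e - v j).toNat j +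
    Multiset.replicate (f + 1).toNat (j + 1)
  have hiff := fun t => hβ.sum_map_eq_iff (t := t) h1 hf h2 h3 h4 h5 h6
  have hset : {s : Multiset OK | (∀ x ∈ s, Indec D x) ∧ s.sum = e • β j + f • β (j + 1)} =
      {t₁.map β, t₂.map β} := by
    ext s
    constructor
    · rintro ⟨hs, hsum⟩
      obtain ⟨t, rfl⟩ := hβ.exists_multiset_map_eq hs
      rcases (hiff t).1 hsum with rfl | rfl
      exacts [Or.inl rfl, Or.inr rfl]
    · rintro (rfl | rfl)
      exacts [⟨hβ.indec_of_mem_map, (hiff t₁).2 (Or.inl rfl)⟩,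
        ⟨hβ.indec_of_mem_map, (hiff t₂).2 (Or.inr rfl)⟩]
  have hne : t₁.map β ≠ t₂.map β := fun h => by
    have := congrArg (Multiset.count (j - 1)) (Multiset.map_injective hβ.injective h)
    simp [t₁, t₂, Multiset.count_replicate, show j ≠ j - 1 by omega,
      show j + 1 ≠ j - 1 by omega] at this
  refine ⟨by rw [pKI, hset]; exact Set.ncard_pair hne, ?_⟩
  simpa [t₁, t₂, Multiset.map_replicate] using hset

/-- under condition (1) of Theorem `thm:D2`, `α` has exactly two
partitions into indecomposable parts, explicitly listed. -/
theorem stmt10 (D : ℕ) (hD : 2 ≤ D) (hsq : Squarefree D)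
    (β : ℤ → OK) (v : ℤ → ℤ) (hβ : BetaSeq D β v)
    (j e f : ℤ) (he : 1 ≤ e) (hf : 0 ≤ f)
    (α : OK) (hα : α = e • β j + f • β (j + 1))
    (h1 : v j ≤ e) (h2 : e ≤ 2 * v j - 1) (h3 : f ≤ v (j + 1) - 2)
    (h4 : ¬(e = 2 * v j - 1 ∧ f = v (j + 1) - 2))
    (h5 : ¬(v (j - 1) = 2 ∧ e = 2 * v j - 1))
    (h6 : ¬(v (j - 1) = 2 ∧ e = 2 * v j - 2 ∧ f = v (j + 1) - 2)) :
    pKI D α = 2 ∧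
      {s : Multiset OK | (∀ x ∈ s, Indec D x) ∧ s.sum = α} =
        {Multiset.replicate e.toNat (β j) + Multiset.replicate f.toNat (β (j + 1)),
         {β (j - 1)} + Multiset.replicate (e - v j).toNat (β j) +
           Multiset.replicate (f + 1).toNat (β (j + 1))} :=
  stmt10_general D β v hβ j e f hf α hα h1 h2 h3 h4 h5 h6
end
end

section
/- Let K = ℚ(√D) with D ≥ 2 squarefree and α = (v_j - 1)β_j + (v_{j+1} - 1)β_{j+1} for some j ∈ ℤ, where (β_j) is the ordered sequence of indecomposables with v_kβ_k = β_{k-1} + β_{k+1}. Then α = β_{j-1} + β_{j+2}, and α has exactly 2 partitions into indecomposable parts if and only if (v_{j-1}, v_j, v_{j+1}, v_{j+2}) ≠ (2, 2, 2, 2). -/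
noncomputable section

/-!
A partition of `α = β_{j-1} + β_{j+2}` into indecomposables is a multiset of indices `k` with
`∑ β_k = α`. For every additive `φ : O_K → ℝ` the sequence `φ(β_k)` satisfies
`v_k φ(β_k) = φ(β_{k-1}) + φ(β_{k+1})` with `v_k ≥ 2`, so it is convex: once nonnegative and
nondecreasing it stays so. As the two embeddings order `β_j` and `β_{j+1}` oppositely, `φ` can be
prescribed freely on these two elements.

Taking `φ = (1, 0)` on `(β_j, β_{j+1})` gives `φ(α) = v_j - 1`, while `φ ≥ v_j` at every index
below `j` and `φ ≥ 0` up to `j + 1`; symmetrically for `(0, 1)`. Hence a partition not using both an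
index `l < j` and an index `m > j + 1` only uses `β_j, β_{j+1}`, with multiplicities
`v_j - 1, v_{j+1} - 1`. Taking `φ = (1, 1)` gives `φ ≥ 1` everywhere, `φ(β_l) ≥ φ(β_{j-1})`,
`φ(β_m) ≥ φ(β_{j+2})` and `φ(α) = φ(β_{j-1}) + φ(β_{j+2})`: the partition is `{β_l, β_m}` with both
inequalities equalities, and for `(l, m) ≠ (j - 1, j + 2)` this forces
`v_{j-1} = v_j = v_{j+1} = v_{j+2} = 2`. In that case `β_{j-2} + β_{j+3}` is a third partition.
-/

lemma emb1_add (D : ℕ) (a b : OK) : emb1 D (a + b) = emb1 D a + emb1 D b := by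
  simp only [emb1, Prod.fst_add, Prod.snd_add]
  push_cast
  ring

lemma emb2_add (D : ℕ) (a b : OK) : emb2 D (a + b) = emb2 D a + emb2 D b := by
  simp only [emb2, Prod.fst_add, Prod.snd_add]
  push_cast
  ring

def emb1Hom (D : ℕ) : OK →+ ℝ := AddMonoidHom.mk' (emb1 D) (emb1_add D)

def emb2Hom (D : ℕ) : OK →+ ℝ := AddMonoidHom.mk' (emb2 D) (emb2_add D)

-- Cramer's rule for the pair of functionals `e, f`.
lemma AddMonoidHom.exists_apply_eq_apply_eq {M : Type*} [AddCommGroup M] (e f : M →+ ℝ)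
    {p q : M} (h : e p * f q ≠ e q * f p) (a b : ℝ) :
    ∃ φ : M →+ ℝ, φ p = a ∧ φ q = b := by
  have hΔ : e p * f q - e q * f p ≠ 0 := sub_ne_zero.mpr h
  refine ⟨(e p * f q - e q * f p)⁻¹ •
    ((a * f q - b * f p) • e + (b * e p - a * e q) • f), ?_, ?_⟩ <;>
  · simp only [AddMonoidHom.smul_apply, AddMonoidHom.add_apply, smul_eq_mul]
    field_simp
    ring

lemma AddMonoidHom.sum_map_comp {ι M : Type*} [AddCommMonoid M] (φ : M →+ ℝ) (β : ι → M)
    (t : Multiset ι) : (t.map fun k => φ (β k)).sum = φ (t.map β).sum := by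
  rw [map_multiset_sum, Multiset.map_map]
  rfl

section Recurrence

variable {u : ℤ → ℝ} {v : ℤ → ℤ}

lemma monotoneOn_Ici_of_recurrence (hv : ∀ k, 2 ≤ v k)
    (hrec : ∀ k, (v k : ℝ) * u k = u (k - 1) + u (k + 1)) {k₀ : ℤ}
    (h₀ : 0 ≤ u k₀) (h₁ : u k₀ ≤ u (k₀ + 1)) : MonotoneOn u (Set.Ici k₀) := by
  have step : ∀ k, k₀ ≤ k → 0 ≤ u k ∧ u k ≤ u (k + 1) := by
    refine Int.leInduction ⟨h₀, h₁⟩ fun k _ ⟨hk, hk₁⟩ => ⟨hk.trans hk₁, ?_⟩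
    have hv' : (2 : ℝ) ≤ v (k + 1) := by exact_mod_cast hv (k + 1)
    have := hrec (k + 1)
    rw [add_sub_cancel_right] at this
    nlinarith
  exact monotoneOn_of_le_add_one Set.ordConnected_Ici fun k _ hk _ => (step k hk).2

lemma antitoneOn_Iic_of_recurrence (hv : ∀ k, 2 ≤ v k)
    (hrec : ∀ k, (v k : ℝ) * u k = u (k - 1) + u (k + 1)) {k₀ : ℤ}
    (h₀ : 0 ≤ u k₀) (h₁ : u k₀ ≤ u (k₀ - 1)) : AntitoneOn u (Set.Iic k₀) := by
  have step : ∀ k, k ≤ k₀ → 0 ≤ u k ∧ u k ≤ u (k - 1) := by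
    refine Int.leInductionDown ⟨h₀, h₁⟩ fun k _ ⟨hk, hk₁⟩ => ⟨hk.trans hk₁, ?_⟩
    have hv' : (2 : ℝ) ≤ v (k - 1) := by exact_mod_cast hv (k - 1)
    have := hrec (k - 1)
    rw [sub_add_cancel] at this
    nlinarith
  refine antitoneOn_of_add_one_le Set.ordConnected_Iic fun k _ _ hk => ?_
  simpa using (step (k + 1) hk).2

end Recurrence

lemma Multiset.forall_mem_not_of_sum_map_lt {ι : Type*} {t : Multiset ι} {u : ι → ℝ}
    {p : ι → Prop} {c : ℝ} (h₀ : ∀ i ∈ t, 0 ≤ u i) (hc : ∀ i ∈ t, p i → c ≤ u i)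
    (hsum : (t.map u).sum < c) : ∀ i ∈ t, ¬ p i := fun i hi hpi =>
  (hc i hi hpi).not_gt <| hsum.trans_le' <| Multiset.single_le_sum
    (by simpa using h₀) _ (Multiset.mem_map_of_mem u hi)

lemma Multiset.eq_pair_of_sum_map_le {ι : Type*} {t : Multiset ι} {u : ι → ℝ} {l m : ι}
    (hl : l ∈ t) (hm : m ∈ t) (hlm : l ≠ m) (hu : ∀ i, 1 ≤ u i)
    (hsum : (t.map u).sum ≤ u l + u m) : t = {l, m} := by
  obtain ⟨r, rfl⟩ := Multiset.exists_cons_of_mem hl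
  obtain ⟨r, rfl⟩ :=
    Multiset.exists_cons_of_mem ((Multiset.mem_cons.mp hm).resolve_left hlm.symm)
  have hr : Multiset.card r • (1 : ℝ) ≤ (r.map u).sum := by
    simpa using Multiset.card_nsmul_le_sum (s := r.map u) (a := 1) (by simpa using fun i _ => hu i)
  simp only [Multiset.map_cons, Multiset.sum_cons, nsmul_eq_mul, mul_one] at hsum hr
  have hr₀ : (Multiset.card r : ℝ) = 0 := by
    linarith [(Multiset.card r).cast_nonneg (α := ℝ)]
  rw [Multiset.card_eq_zero.mp (by exact_mod_cast hr₀ : Multiset.card r = 0)]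
  rfl

lemma Multiset.eq_replicate_add_replicate {ι : Type*} [DecidableEq ι] {t : Multiset ι}
    {a b : ι} (hab : a ≠ b) (ht : ∀ i ∈ t, i = a ∨ i = b) :
    t = Multiset.replicate (t.count a) a + Multiset.replicate (t.count b) b := by
  ext i
  rw [Multiset.count_add, Multiset.count_replicate, Multiset.count_replicate]
  split_ifs with ha hb hb
  · exact absurd (ha.trans hb.symm) hab
  · simp [ha]
  · simp [hb]
  · have : i ∉ t := fun hi => (ht i hi).elim (fun h => ha h.symm) fun h => hb h.symm
    simp [Multiset.count_eq_zero.mpr this]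

lemma Int.eq_two_of_mul_sub_one_le {a b : ℤ} (ha : 2 ≤ a) (hb : 2 ≤ b)
    (h : a * (b - 1) ≤ b) : a = 2 ∧ b = 2 := by
  constructor <;> nlinarith

namespace BetaSeq

variable {D : ℕ} {β : ℤ → OK} {v : ℤ → ℤ}

lemma add_eq_smul (hβ : BetaSeq D β v) {i k l : ℤ} (hi : i + 1 = k) (hl : k + 1 = l) :
    β i + β l = v k • β k := by
  subst hi hl
  rw [hβ.rel, add_sub_cancel_right]

lemma apply_add_apply (hβ : BetaSeq D β v) (φ : OK →+ ℝ) {i k l : ℤ} (hi : i + 1 = k)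
    (hl : k + 1 = l) : φ (β i) + φ (β l) = v k * φ (β k) := by
  rw [← map_add, hβ.add_eq_smul hi hl, map_zsmul, zsmul_eq_mul]

lemma smul_add_smul_eq (hβ : BetaSeq D β v) (j : ℤ) :
    (v j - 1) • β j + (v (j + 1) - 1) • β (j + 1) = β (j - 1) + β (j + 2) := by
  rw [sub_smul, sub_smul, one_smul, one_smul, ← hβ.add_eq_smul (sub_add_cancel j 1) rfl,
    ← hβ.add_eq_smul rfl (by ring : j + 1 + 1 = j + 2)]
  abel

lemma antitoneOn_Iic (hβ : BetaSeq D β v) (φ : OK →+ ℝ) {k₀ : ℤ} (h₀ : 0 ≤ φ (β k₀))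
    (h₁ : φ (β k₀) ≤ φ (β (k₀ - 1))) : AntitoneOn (fun k => φ (β k)) (Set.Iic k₀) :=
  antitoneOn_Iic_of_recurrence hβ.v_two_le
    (fun k => (hβ.apply_add_apply φ (sub_add_cancel k 1) rfl).symm) h₀ h₁

lemma monotoneOn_Ici (hβ : BetaSeq D β v) (φ : OK →+ ℝ) {k₀ : ℤ} (h₀ : 0 ≤ φ (β k₀))
    (h₁ : φ (β k₀) ≤ φ (β (k₀ + 1))) : MonotoneOn (fun k => φ (β k)) (Set.Ici k₀) :=
  monotoneOn_Ici_of_recurrence hβ.v_two_le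
    (fun k => (hβ.apply_add_apply φ (sub_add_cancel k 1) rfl).symm) h₀ h₁

lemma exists_addMonoidHom (hβ : BetaSeq D β v) (j : ℤ) (a b : ℝ) :
    ∃ φ : OK →+ ℝ, φ (β j) = a ∧ φ (β (j + 1)) = b ∧
      φ (β (j - 1)) = v j * a - b ∧ φ (β (j + 2)) = v (j + 1) * b - a := by
  obtain ⟨φ, hj, hj₁⟩ := (emb1Hom D).exists_apply_eq_apply_eq (emb2Hom D) (ne_of_lt <|
    mul_lt_mul'' (hβ.mono (lt_add_one j)) (hβ.strictAnti_emb2 (lt_add_one j))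
      (hβ.indec j).1.1.le (hβ.indec (j + 1)).1.2.le) a b
  have h_prev := hβ.apply_add_apply φ (sub_add_cancel j 1) rfl
  have h_next := hβ.apply_add_apply φ (k := j + 1) rfl (by ring : j + 1 + 1 = j + 2)
  rw [hj, hj₁] at h_prev h_next
  exact ⟨φ, hj, hj₁, by linarith, by linarith⟩

lemma exists_addMonoidHom_one_one (hβ : BetaSeq D β v) (j : ℤ) :
    ∃ L : OK →+ ℝ, L (β j) = 1 ∧ L (β (j + 1)) = 1 ∧
      L (β (j - 1)) = v j - 1 ∧ L (β (j + 2)) = v (j + 1) - 1 ∧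
      AntitoneOn (fun k => L (β k)) (Set.Iic j) ∧
      MonotoneOn (fun k => L (β k)) (Set.Ici (j + 1)) := by
  obtain ⟨L, hLj, hLj₁, hL_prev, hL_next⟩ := hβ.exists_addMonoidHom j 1 1
  have hv_j : (2 : ℝ) ≤ v j := by exact_mod_cast hβ.v_two_le j
  have hv_j₁ : (2 : ℝ) ≤ v (j + 1) := by exact_mod_cast hβ.v_two_le (j + 1)
  refine ⟨L, hLj, hLj₁, by linarith, by linarith,
    hβ.antitoneOn_Iic L (by simp [hLj]) (by linarith), hβ.monotoneOn_Ici L (by simp [hLj₁]) ?_⟩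
  rw [add_assoc, one_add_one_eq_two]
  linarith

lemma v_eq_two_of_add_eq (hβ : BetaSeq D β v) {j l m : ℤ} (hl : l < j - 1) (hm : j + 2 < m)
    (h : β l + β m = β (j - 1) + β (j + 2)) :
    v (j - 1) = 2 ∧ v j = 2 ∧ v (j + 1) = 2 ∧ v (j + 2) = 2 := by
  obtain ⟨L, hLj, hLj₁, hL_prev, hL_next, hanti, hmono⟩ := hβ.exists_addMonoidHom_one_one j
  have hLsum := congrArg L h
  rw [map_add, map_add] at hLsum
  have h_prev : L (β (j - 1)) ≤ L (β l) :=
    hanti (Set.mem_Iic.mpr (by omega)) (Set.mem_Iic.mpr (by omega)) (by omega)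
  have h_next : L (β (j + 2)) ≤ L (β m) :=
    hmono (Set.mem_Ici.mpr (by omega)) (Set.mem_Ici.mpr (by omega)) (by omega)
  have h_prev₂ : L (β (j - 2)) ≤ L (β l) :=
    hanti (Set.mem_Iic.mpr (by omega)) (Set.mem_Iic.mpr (by omega)) (by omega)
  have h_next₂ : L (β (j + 3)) ≤ L (β m) :=
    hmono (Set.mem_Ici.mpr (by omega)) (Set.mem_Ici.mpr (by omega)) (by omega)
  have hL_prev₂ := hβ.apply_add_apply L (i := j - 2) (k := j - 1) (by ring) (by ring)
  have hL_next₂ := hβ.apply_add_apply L (i := j + 1) (k := j + 2) (l := j + 3)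
    (by ring) (by ring)
  rw [hLj, hL_prev] at hL_prev₂
  rw [hLj₁, hL_next] at hL_next₂
  obtain ⟨h₁, h₂⟩ := Int.eq_two_of_mul_sub_one_le (hβ.v_two_le (j - 1)) (hβ.v_two_le j) (by
    have : (v (j - 1) : ℝ) * (v j - 1) ≤ v j := by linarith
    exact_mod_cast this)
  obtain ⟨h₄, h₃⟩ := Int.eq_two_of_mul_sub_one_le (hβ.v_two_le (j + 2)) (hβ.v_two_le (j + 1)) (by
    have : (v (j + 2) : ℝ) * (v (j + 1) - 1) ≤ v (j + 1) := by linarith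
    exact_mod_cast this)
  exact ⟨h₁, h₂, h₃, h₄⟩

lemma pKI_eq_ncard (hβ : BetaSeq D β v) (α : OK) :
    pKI D α = {t : Multiset ℤ | (t.map β).sum = α}.ncard := by
  rw [pKI, ← Set.ncard_image_of_injective _ (Multiset.map_injective hβ.injective)]
  congr 1
  ext s
  simp only [Set.mem_ofPred_eq, Set.mem_image]
  constructor
  · rintro ⟨hind, rfl⟩
    induction s using Multiset.induction_on with
    | empty => exact ⟨0, rfl, rfl⟩
    | cons a s ih =>
      obtain ⟨t, -, ht⟩ := ih (fun x hx => hind x (Multiset.mem_cons_of_mem hx))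
      obtain ⟨k, rfl⟩ := hβ.surj a (hind a (Multiset.mem_cons_self a s))
      exact ⟨k ::ₘ t, by rw [Multiset.map_cons, ht], by rw [Multiset.map_cons, ht]⟩
  · rintro ⟨t, ht, rfl⟩
    refine ⟨fun x hx => ?_, ht⟩
    obtain ⟨k, -, rfl⟩ := Multiset.mem_map.mp hx
    exact hβ.indec k

section Partitions

variable (hβ : BetaSeq D β v) {j l m : ℤ} {t : Multiset ℤ}
  (ht : (t.map β).sum = β (j - 1) + β (j + 2))
include hβ ht

lemma forall_mem_ge_of_forall_mem_le (hle : ∀ k ∈ t, k ≤ j + 1) : ∀ k ∈ t, j ≤ k := by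
  obtain ⟨x, hxj, hxj₁, hx_prev, hx_next⟩ := hβ.exists_addMonoidHom j 1 0
  have hanti := hβ.antitoneOn_Iic x (k₀ := j + 1) (by simp [hxj₁]) (by simp [hxj, hxj₁])
  intro k hk
  by_contra hkj
  refine Multiset.forall_mem_not_of_sum_map_lt (u := fun k => x (β k)) (p := (· < j))
    (c := v j) (fun i hi => ?_) (fun i hi hij => ?_) ?_ k hk (not_le.mp hkj)
  · simpa [hxj₁] using hanti (Set.mem_Iic.mpr (hle i hi)) Set.self_mem_Iic (hle i hi)
  · have := hanti (Set.mem_Iic.mpr (by omega : i ≤ j + 1)) (Set.mem_Iic.mpr (by omega))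
      (by omega : i ≤ j - 1)
    simp only at this
    linarith
  · rw [x.sum_map_comp, ht, map_add, hx_prev, hx_next]
    linarith

lemma forall_mem_le_of_forall_mem_ge (hge : ∀ k ∈ t, j ≤ k) : ∀ k ∈ t, k ≤ j + 1 := by
  obtain ⟨y, hyj, hyj₁, hy_prev, hy_next⟩ := hβ.exists_addMonoidHom j 0 1
  have hmono := hβ.monotoneOn_Ici y (k₀ := j) (by simp [hyj]) (by simp [hyj, hyj₁])
  intro k hk
  by_contra hkj
  refine Multiset.forall_mem_not_of_sum_map_lt (u := fun k => y (β k)) (p := (j + 1 < ·))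
    (c := v (j + 1)) (fun i hi => ?_) (fun i hi hij => ?_) ?_ k hk (not_le.mp hkj)
  · simpa [hyj] using hmono Set.self_mem_Ici (Set.mem_Ici.mpr (hge i hi)) (hge i hi)
  · have := hmono (Set.mem_Ici.mpr (by omega : j ≤ j + 2)) (Set.mem_Ici.mpr (by omega))
      (by omega : j + 2 ≤ i)
    simp only at this
    linarith
  · rw [y.sum_map_comp, ht, map_add, hy_prev, hy_next]
    linarith

lemma eq_replicate_of_forall_mem (hmid : ∀ k ∈ t, k = j ∨ k = j + 1) :
    t = Multiset.replicate (v j - 1).toNat j +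
      Multiset.replicate (v (j + 1) - 1).toNat (j + 1) := by
  classical
  obtain ⟨x, hxj, hxj₁, hx_prev, hx_next⟩ := hβ.exists_addMonoidHom j 1 0
  obtain ⟨y, hyj, hyj₁, hy_prev, hy_next⟩ := hβ.exists_addMonoidHom j 0 1
  have ht' := Multiset.eq_replicate_add_replicate (by omega) hmid
  have hxsum := x.sum_map_comp β t
  have hysum := y.sum_map_comp β t
  rw [ht, map_add, ht'] at hxsum hysum
  simp only [Multiset.map_add, Multiset.map_replicate, Multiset.sum_add, Multiset.sum_replicate,
    nsmul_eq_mul, hxj, hxj₁, hyj, hyj₁, mul_one, mul_zero, add_zero, zero_add] at hxsum hysum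
  have ha : (t.count j : ℤ) = v j - 1 := by
    exact_mod_cast (by linarith : (t.count j : ℝ) = v j - 1)
  have hb : (t.count (j + 1) : ℤ) = v (j + 1) - 1 := by
    exact_mod_cast (by linarith : (t.count (j + 1) : ℝ) = v (j + 1) - 1)
  rw [ht', ← ha, ← hb, Int.toNat_natCast, Int.toNat_natCast]

lemma eq_pair_of_lt_of_lt (hl : l ∈ t) (hlj : l < j) (hm : m ∈ t) (hmj : j + 1 < m) :
    t = {l, m} := by
  obtain ⟨L, hLj, hLj₁, -, -, hanti, hmono⟩ := hβ.exists_addMonoidHom_one_one j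
  refine Multiset.eq_pair_of_sum_map_le (u := fun k => L (β k)) hl hm (by omega)
    (fun k => ?_) ?_
  · rcases le_or_gt k j with hk | hk
    · simpa [hLj] using hanti (Set.mem_Iic.mpr hk) Set.self_mem_Iic hk
    · simpa [hLj₁] using hmono Set.self_mem_Ici (Set.mem_Ici.mpr (by omega)) (by omega)
  · have h_prev : L (β (j - 1)) ≤ L (β l) :=
      hanti (Set.mem_Iic.mpr (by omega)) (Set.mem_Iic.mpr (by omega)) (by omega)
    have h_next : L (β (j + 2)) ≤ L (β m) :=
      hmono (Set.mem_Ici.mpr (by omega)) (Set.mem_Ici.mpr (by omega)) (by omega)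
    rw [L.sum_map_comp, ht, map_add]
    linarith

lemma eq_pair_or_eq_two (hl : l ∈ t) (hlj : l < j) (hm : m ∈ t) (hmj : j + 1 < m) :
    t = {j - 1, j + 2} ∨ (v (j - 1) = 2 ∧ v j = 2 ∧ v (j + 1) = 2 ∧ v (j + 2) = 2) := by
  obtain rfl := hβ.eq_pair_of_lt_of_lt ht hl hlj hm hmj
  have hβsum : β l + β m = β (j - 1) + β (j + 2) := by simpa using ht
  rcases eq_or_ne l (j - 1) with rfl | hl₁
  · rw [add_right_inj] at hβsum
    exact Or.inl (by rw [hβ.injective hβsum])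
  rcases eq_or_ne m (j + 2) with rfl | hm₂
  · exact absurd (hβ.injective (add_left_injective _ hβsum)) hl₁
  exact Or.inr (hβ.v_eq_two_of_add_eq (by omega) (by omega) hβsum)

theorem eq_pair_or_eq_replicate_or_eq_two :
    t = {j - 1, j + 2} ∨
      t = Multiset.replicate (v j - 1).toNat j +
        Multiset.replicate (v (j + 1) - 1).toNat (j + 1) ∨
      (v (j - 1) = 2 ∧ v j = 2 ∧ v (j + 1) = 2 ∧ v (j + 2) = 2) := by
  by_cases hlow : ∃ l ∈ t, l < j
  · obtain ⟨l, hl, hlj⟩ := hlow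
    by_cases hhigh : ∃ m ∈ t, j + 1 < m
    · obtain ⟨m, hm, hmj⟩ := hhigh
      exact (hβ.eq_pair_or_eq_two ht hl hlj hm hmj).imp_right Or.inr
    · push Not at hhigh
      exact absurd (hβ.forall_mem_ge_of_forall_mem_le ht hhigh l hl) (not_le.mpr hlj)
  · push Not at hlow
    have hhigh := hβ.forall_mem_le_of_forall_mem_ge ht hlow
    refine Or.inr (Or.inl (hβ.eq_replicate_of_forall_mem ht fun k hk => ?_))
    have := hlow k hk
    have := hhigh k hk
    omega

end Partitions

section Count

variable (hβ : BetaSeq D β v) (j : ℤ)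
include hβ

lemma sum_map_replicate_add_replicate :
    ((Multiset.replicate (v j - 1).toNat j +
      Multiset.replicate (v (j + 1) - 1).toNat (j + 1)).map β).sum = β (j - 1) + β (j + 2) := by
  rw [← hβ.smul_add_smul_eq j, Multiset.map_add, Multiset.map_replicate, Multiset.map_replicate,
    Multiset.sum_add, Multiset.sum_replicate, Multiset.sum_replicate, ← natCast_zsmul,
    ← natCast_zsmul, Int.toNat_of_nonneg (by linarith [hβ.v_two_le j]),
    Int.toNat_of_nonneg (by linarith [hβ.v_two_le (j + 1)])]

lemma ncard_eq_two (hv : ¬(v (j - 1) = 2 ∧ v j = 2 ∧ v (j + 1) = 2 ∧ v (j + 2) = 2)) :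
    {t : Multiset ℤ | (t.map β).sum = β (j - 1) + β (j + 2)}.ncard = 2 := by
  have hne : ({j - 1, j + 2} : Multiset ℤ) ≠ Multiset.replicate (v j - 1).toNat j +
      Multiset.replicate (v (j + 1) - 1).toNat (j + 1) :=
    ne_of_mem_of_not_mem' (a := j - 1) (by simp) (by simp [Multiset.mem_replicate]; omega)
  convert Set.ncard_pair hne
  ext t
  simp only [Set.mem_ofPred_eq, Set.mem_insert_iff, Set.mem_singleton_iff]
  constructor
  · intro ht
    obtain h | h | h := hβ.eq_pair_or_eq_replicate_or_eq_two ht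
    exacts [Or.inl h, Or.inr h, absurd h hv]
  · rintro (rfl | rfl)
    · simp
    · exact hβ.sum_map_replicate_add_replicate j

lemma ncard_ne_two (hv : v (j - 1) = 2 ∧ v j = 2 ∧ v (j + 1) = 2 ∧ v (j + 2) = 2) :
    {t : Multiset ℤ | (t.map β).sum = β (j - 1) + β (j + 2)}.ncard ≠ 2 := by
  obtain ⟨h₁, h₂, h₃, h₄⟩ := hv
  have e₁ := hβ.add_eq_smul (i := j - 2) (k := j - 1) (l := j) (by ring) (by ring)
  have e₂ := hβ.add_eq_smul (i := j - 1) (k := j) (l := j + 1) (by ring) (by ring)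
  have e₃ := hβ.add_eq_smul (i := j) (k := j + 1) (l := j + 2) (by ring) (by ring)
  have e₄ := hβ.add_eq_smul (i := j + 1) (k := j + 2) (l := j + 3) (by ring) (by ring)
  rw [h₁] at e₁
  rw [h₂] at e₂
  rw [h₃] at e₃
  rw [h₄] at e₄
  intro hcard
  have hfin := Set.finite_of_ncard_pos (hcard ▸ two_pos)
  refine (Set.two_lt_ncard_iff hfin).mpr ⟨{j - 1, j + 2}, {j, j + 1}, {j - 2, j + 3},
    by simp, ?_, ?_, ?_, ?_, ?_⟩ |>.ne' hcard
  · simp only [Set.mem_ofPred_eq, Multiset.insert_eq_cons, Multiset.map_cons,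
      Multiset.map_singleton, Multiset.sum_cons, Multiset.sum_singleton]
    linear_combination (norm := module) -e₂ - e₃
  · simp only [Set.mem_ofPred_eq, Multiset.insert_eq_cons, Multiset.map_cons,
      Multiset.map_singleton, Multiset.sum_cons, Multiset.sum_singleton]
    linear_combination (norm := module) e₁ + e₂ + e₃ + e₄
  · exact ne_of_mem_of_not_mem' (a := j - 1) (by simp) (by simp; omega)
  · exact ne_of_mem_of_not_mem' (a := j - 1) (by simp) (by simp; omega)
  · exact ne_of_mem_of_not_mem' (a := j) (by simp) (by simp; omega)

end Count

end BetaSeq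

theorem stmt11_general (D : ℕ)
    (β : ℤ → OK) (v : ℤ → ℤ) (hβ : BetaSeq D β v)
    (j : ℤ) (α : OK)
    (hα : α = (v j - 1) • β j + (v (j + 1) - 1) • β (j + 1)) :
    α = β (j - 1) + β (j + 2) ∧
      (pKI D α = 2 ↔
        ¬(v (j - 1) = 2 ∧ v j = 2 ∧ v (j + 1) = 2 ∧ v (j + 2) = 2)) := by
  obtain rfl : α = β (j - 1) + β (j + 2) := hα.trans (hβ.smul_add_smul_eq j)
  refine ⟨rfl, ?_⟩
  rw [hβ.pKI_eq_ncard]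
  exact ⟨fun h hv => hβ.ncard_ne_two j hv h, hβ.ncard_eq_two j⟩

/-- `(v_j-1)β_j + (v_{j+1}-1)β_{j+1} = β_{j-1} + β_{j+2}` and it has
exactly two partitions into indecomposables iff `(v_{j-1},v_j,v_{j+1},v_{j+2}) ≠ (2,2,2,2)`. -/
theorem stmt11 (D : ℕ) (hD : 2 ≤ D) (hsq : Squarefree D)
    (β : ℤ → OK) (v : ℤ → ℤ) (hβ : BetaSeq D β v)
    (j : ℤ) (α : OK)
    (hα : α = (v j - 1) • β j + (v (j + 1) - 1) • β (j + 1)) :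
    α = β (j - 1) + β (j + 2) ∧
      (pKI D α = 2 ↔
        ¬(v (j - 1) = 2 ∧ v j = 2 ∧ v (j + 1) = 2 ∧ v (j + 2) = 2)) :=
  stmt11_general D β v hβ j α hα
end
end

section
/- Let K = ℚ(√D) with D ≥ 2 squarefree and discriminant Δ. If α ∈ O_K^+ can be expressed as a sum of indecomposables in exactly 2 ways, i.e. p_K(α|I) = 2, then Nm(α) < 5√Δ(√Δ+1)(3√Δ+2). -/
noncomputable section

/-!
Write `ω' = -θ` and `t = ω + ω'`. Starting from `β₀ = ⌈θ⌉ + t - ω` and `β₁ = 1`, the recursion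
`β_{n+2} = v_n β_{n+1} - β_n` with `v_n = ⌈β_n' / β_{n+1}'⌉ ≥ 2` produces `ℤ`-bases
`(β_n, β_{n+1})` of totally positive elements ordered oppositely by the two embeddings. No lattice
point lies strictly between `0` and `β_{n+1}` in both embeddings, so every `β_n` is
indecomposable. The unit determinant bounds their norms by `Δ/4`, hence
`v_n² Nm β_{n+1} < Δ + v_n √Δ` and `v_n < 2√Δ`.

Up to conjugation a totally positive `α` lies in one of the cones `α = a β_{i+1} + b β_{i+2}`
with `a, b ∈ ℕ`. Exchanging `v_i` copies of `β_{i+1}` for `β_i + β_{i+2}`, or `v_{i+1}` copies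
of `β_{i+2}` for `β_{i+1} + β_{i+3}`, yields further partitions of `α`; with only two of them,
`a < 2 v_i`, `b < 2 v_{i+1}` and `a < v_i ∨ b < v_{i+1}`. Expanding `Nm α` as a quadratic form
in `a, b` then gives `Nm α ≤ 27 Δ + 8 Δ √Δ`.
-/

theorem Nat.exists_and_not_succ {P : ℕ → Prop} (h0 : P 0) {N : ℕ} (hN : ¬ P N) :
    ∃ i, P i ∧ ¬ P (i + 1) := by
  induction N with
  | zero => exact absurd h0 hN
  | succ N ih =>
    by_cases hP : P N
    · exact ⟨N, hP, hN⟩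
    · exact ih hP

theorem Set.two_lt_encard_of_mem {X : Type*} {S : Set X} {x y z : X} (hx : x ∈ S)
    (hy : y ∈ S) (hz : z ∈ S) (hxy : x ≠ y) (hxz : x ≠ z) (hyz : y ≠ z) : 2 < S.encard := by
  have h3 : ({x, y, z} : Set X).encard = 3 :=
    Set.encard_eq_three.mpr ⟨x, y, z, hxy, hxz, hyz, rfl⟩
  calc (2 : ℕ∞) < 3 := by norm_num
    _ = _ := h3.symm
    _ ≤ S.encard := Set.encard_le_encard (by rintro w (rfl | rfl | rfl) <;> assumption)

namespace QuadraticIndecomposables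

section Partitions

variable {M : Type*}

def partitions [AddCommMonoid M] (P : M → Prop) (α : M) : Set (Multiset M) :=
  {s | (∀ x ∈ s, P x) ∧ s.sum = α}

lemma map_mem_partitions [AddCommMonoid M] {N : Type*} [AddCommMonoid N] {P : M → Prop}
    {Q : N → Prop} (f : M →+ N) (hf : ∀ x, P x → Q (f x)) {α : M} {s : Multiset M}
    (hs : s ∈ partitions P α) :
    s.map f ∈ partitions Q (f α) :=
  ⟨by simpa using fun x hx => hf x (hs.1 x hx), by rw [← map_multiset_sum, hs.2]⟩

variable [DecidableEq M]

def exchange (s : Multiset M) (v : ℕ) (x y z : M) : Multiset M :=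
  y ::ₘ z ::ₘ (s - Multiset.replicate v x)

variable {s : Multiset M} {v : ℕ} {x y z : M}

lemma count_exchange_of_ne {w : M} (hwx : w ≠ x) (hwy : w ≠ y) (hwz : w ≠ z) :
    (exchange s v x y z).count w = s.count w := by
  simp [exchange, Multiset.count_sub, Multiset.count_replicate, hwy, hwz, Ne.symm hwx]

lemma count_exchange_right (hzx : z ≠ x) (hzy : z ≠ y) :
    (exchange s v x y z).count z = s.count z + 1 := by
  simp [exchange, Multiset.count_sub, Multiset.count_replicate, hzy, Ne.symm hzx]

lemma count_exchange_left (hyx : y ≠ x) (hzx : z ≠ x) :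
    (exchange s v x y z).count x = s.count x - v := by
  rw [exchange, Multiset.count_cons_of_ne hyx.symm, Multiset.count_cons_of_ne hzx.symm,
    Multiset.count_sub, Multiset.count_replicate_self]

variable [AddCommMonoid M] {P : M → Prop} {α : M}

lemma exchange_mem_partitions (hs : s ∈ partitions P α) (hv : v • x = y + z)
    (hy : P y) (hz : P z) (hx : v ≤ s.count x) : exchange s v x y z ∈ partitions P α := by
  have hle := Multiset.le_count_iff_replicate_le.mp hx
  refine ⟨fun w hw => ?_, ?_⟩
  · rcases Multiset.mem_cons.mp hw with rfl | hw
    · exact hy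
    rcases Multiset.mem_cons.mp hw with rfl | hw
    · exact hz
    exact hs.1 w (Multiset.mem_of_le (Multiset.sub_le_self _ _) hw)
  · calc (exchange s v x y z).sum = (s - Multiset.replicate v x).sum + v • x := by
          rw [hv, exchange, Multiset.sum_cons, Multiset.sum_cons]; abel
      _ = α := by
          rw [← Multiset.sum_replicate, ← Multiset.sum_add, Multiset.sub_add_cancel hle, hs.2]

/-- Otherwise `s` and the results of exchanging once and twice are three partitions. -/
lemma count_lt_two_mul_of_encard_le_two (h2 : (partitions P α).encard ≤ 2)
    (hs : s ∈ partitions P α) (hv : v • x = y + z) (hy : P y) (hz : P z)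
    (hyx : y ≠ x) (hzx : z ≠ x) (hzy : z ≠ y) : s.count x < 2 * v := by
  by_contra! hle
  have hs1 := exchange_mem_partitions hs hv hy hz (by omega)
  have hs2 := exchange_mem_partitions hs1 hv hy hz (by rw [count_exchange_left hyx hzx]; omega)
  refine (Set.two_lt_encard_of_mem hs hs1 hs2 ?_ ?_ ?_).not_ge h2 <;> intro he <;>
    have := congrArg (Multiset.count z) he <;>
    simp only [count_exchange_right hzx hzy] at this <;> omega

/-- Otherwise `s` and the results of the two exchanges are three partitions. -/
lemma count_lt_or_count_lt_of_encard_le_two (h2 : (partitions P α).encard ≤ 2)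
    (hs : s ∈ partitions P α) {v' : ℕ} {x' y' z' : M} (hv : v • x = y + z)
    (hv' : v' • x' = y' + z') (hy : P y) (hz : P z) (hy' : P y') (hz' : P z')
    (hzx : z ≠ x) (hzy : z ≠ y) (hzx' : z ≠ x') (hzy' : z ≠ y') (hzz' : z ≠ z')
    (hz'x' : z' ≠ x') (hz'y' : z' ≠ y') : s.count x < v ∨ s.count x' < v' := by
  by_contra! hle
  have hs1 := exchange_mem_partitions hs hv hy hz hle.1
  have hs2 := exchange_mem_partitions hs hv' hy' hz' hle.2
  refine (Set.two_lt_encard_of_mem hs hs1 hs2 ?_ ?_ ?_).not_ge h2 <;> intro he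
  · simpa [count_exchange_right hzx hzy] using congrArg (Multiset.count z) he
  · simpa [count_exchange_right hz'x' hz'y'] using congrArg (Multiset.count z') he
  · simpa [count_exchange_right hzx hzy, count_exchange_of_ne hzx' hzy' hzz'] using
      congrArg (Multiset.count z) he

end Partitions

/-- In a chain `v j • f (j + 1) = f j + f (j + 2)` of distinct parts, a second and a third
partition of `a • f (i + 1) + b • f (i + 2)` arise by a double exchange or by two different
exchanges. -/
lemma lt_of_encard_partitions_le_two {M : Type*} [AddCommMonoid M] [DecidableEq M]
    {P : M → Prop} {f : ℕ → M} (hf : Function.Injective f) (hP : ∀ j, P (f j))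
    {v : ℕ → ℕ} (hrel : ∀ j, v j • f (j + 1) = f j + f (j + 2)) {i a b : ℕ}
    (h2 : (partitions P (a • f (i + 1) + b • f (i + 2))).encard ≤ 2) :
    a < 2 * v i ∧ b < 2 * v (i + 1) ∧ (a < v i ∨ b < v (i + 1)) := by
  set s := Multiset.replicate a (f (i + 1)) + Multiset.replicate b (f (i + 2))
  have hs : s ∈ partitions P (a • f (i + 1) + b • f (i + 2)) := by
    refine ⟨fun x hx => ?_, by simp [s, Multiset.sum_replicate]⟩
    rcases Multiset.mem_add.mp hx with hx | hx <;> rw [Multiset.eq_of_mem_replicate hx] <;>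
      exact hP _
  have ha : s.count (f (i + 1)) = a := by
    simp [s, Multiset.count_replicate, hf.ne (show i + 2 ≠ i + 1 by omega)]
  have hb : s.count (f (i + 2)) = b := by
    simp [s, Multiset.count_replicate, hf.ne (show i + 1 ≠ i + 2 by omega)]
  have hv : v i • f (i + 1) = f (i + 2) + f i := (hrel i).trans (add_comm _ _)
  have hv' : v (i + 1) • f (i + 2) = f (i + 1) + f (i + 3) := hrel (i + 1)
  refine ⟨ha ▸ count_lt_two_mul_of_encard_le_two h2 hs hv (hP _) (hP _)
      (hf.ne (by omega)) (hf.ne (by omega)) (hf.ne (by omega)),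
    hb ▸ count_lt_two_mul_of_encard_le_two h2 hs hv' (hP _) (hP _)
      (hf.ne (by omega)) (hf.ne (by omega)) (hf.ne (by omega)), ?_⟩
  have := count_lt_or_count_lt_of_encard_le_two h2 hs hv hv' (hP _) (hP _) (hP _) (hP _)
    (hf.ne (by omega)) (hf.ne (by omega)) (hf.ne (by omega)) (hf.ne (by omega))
    (hf.ne (by omega)) (hf.ne (by omega)) (hf.ne (by omega))
  rwa [ha, hb] at this

lemma quadratic_le_of_exchange_bounds {R a b vb vg Nb Ng X : ℝ} (hR : 0 < R) (ha : 0 ≤ a)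
    (hb : 0 ≤ b) (hvb : vb ≤ 2 * R) (hvg : vg ≤ 2 * R) (hNb : 0 ≤ Nb) (hNg : 0 ≤ Ng)
    (hX : 0 ≤ X) (hXN : X ^ 2 ≤ Nb * Ng) (hvbN : vb ^ 2 * Nb ≤ 3 * R ^ 2)
    (hvgN : vg ^ 2 * Ng ≤ 3 * R ^ 2) (ha2 : a ≤ 2 * vb) (hb2 : b ≤ 2 * vg)
    (hab : a ≤ vb ∨ b ≤ vg) :
    a ^ 2 * Nb + a * b * (2 * X + R) + b ^ 2 * Ng ≤ 27 * R ^ 2 + 8 * R ^ 3 := by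
  have hvb0 : 0 ≤ vb := by linarith
  have hvg0 : 0 ≤ vg := by linarith
  have hsq {c v N : ℝ} (k : ℝ) (hc : 0 ≤ c) (hcv : c ≤ k * v) (hN : 0 ≤ N) :
      c ^ 2 * N ≤ k ^ 2 * (v ^ 2 * N) :=
    calc c ^ 2 * N ≤ (k * v) ^ 2 * N := by gcongr
      _ = k ^ 2 * (v ^ 2 * N) := by ring
  have hsquares : a ^ 2 * Nb + b ^ 2 * Ng ≤ 15 * R ^ 2 := by
    rcases hab with hab | hab
    · nlinarith [hsq 1 ha (by linarith : a ≤ 1 * vb) hNb, hsq 2 hb hb2 hNg]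
    · nlinarith [hsq 2 ha ha2 hNb, hsq 1 hb (by linarith : b ≤ 1 * vg) hNg]
  have hprod : a * b ≤ 2 * (vb * vg) := by
    rcases hab with hab | hab
    · nlinarith [mul_le_mul hab hb2 hb hvb0]
    · nlinarith [mul_le_mul ha2 hab hb (by linarith)]
  have hcross : vb * vg * X ≤ 3 * R ^ 2 := by
    refine (le_abs_self _).trans (abs_le_of_sq_le_sq ?_ (by positivity))
    calc (vb * vg * X) ^ 2 = vb ^ 2 * vg ^ 2 * X ^ 2 := by ring
      _ ≤ vb ^ 2 * vg ^ 2 * (Nb * Ng) := by gcongr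
      _ = (vb ^ 2 * Nb) * (vg ^ 2 * Ng) := by ring
      _ ≤ (3 * R ^ 2) * (3 * R ^ 2) := by gcongr
      _ = (3 * R ^ 2) ^ 2 := by ring
  have hvv : vb * vg ≤ 4 * R ^ 2 := by nlinarith
  nlinarith [mul_le_mul_of_nonneg_right hprod (by positivity : 0 ≤ 2 * X + R)]

/-- The points `s • g + y • (d - g)` of the lattice spanned by `g` and `d` avoid the open box
`(0, d₁) × (0, d₂)` as soon as `g₁ < d₁` and `d₂ < g₂`. -/
lemma lattice_point_not_mem_box {s y : ℤ} {g1 g2 d1 d2 : ℝ} (hg1 : 0 < g1) (hg2 : 0 < g2)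
    (h1 : g1 < d1) (h2 : d2 < g2)
    (hτ1 : 0 < s * g1 + y * (d1 - g1)) (hτ1' : s * g1 + y * (d1 - g1) < d1)
    (hτ2 : 0 < s * g2 + y * (d2 - g2)) (hτ2' : s * g2 + y * (d2 - g2) < d2) : False := by
  have hint (n : ℤ) : (n : ℝ) ≤ 0 ∨ 1 ≤ (n : ℝ) := by
    rcases le_or_gt n 0 with h | h
    · exact .inl (by exact_mod_cast h)
    · exact .inr (by exact_mod_cast h)
  rcases hint s with hs | hs <;> rcases hint y with hy | hy <;> nlinarith

variable {D : ℕ}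

def traceOmega (D : ℕ) : ℤ := if D % 4 = 1 then 1 else 0

def sqrtDisc (D : ℕ) : ℝ := Real.sqrt (disc D)

def theta (D : ℕ) : ℝ := -omegaD' D

/-- The norm form `x² + t x y - n y²` of `ℤ[ω_D]`, with `t = ω + ω'` and `n = -ω ω'`. -/
def intNorm (D : ℕ) (a : OK) : ℤ :=
  a.1 ^ 2 + traceOmega D * a.1 * a.2 -
    a.2 ^ 2 * (if D % 4 = 1 then ((D : ℤ) - 1) / 4 else (D : ℤ))

section Constants

lemma two_le_of_not_isSquare (hD : ¬ IsSquare D) : 2 ≤ D := by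
  by_contra! h
  interval_cases D <;> exact hD (by decide)

lemma not_isSquare_of_squarefree (hD : 2 ≤ D) (hsq : Squarefree D) : ¬ IsSquare D := by
  rintro ⟨k, rfl⟩
  have hk : k = 1 := Nat.isUnit_iff.mp (hsq k dvd_rfl)
  subst hk
  omega

lemma traceOmega_nonneg : (0 : ℝ) ≤ traceOmega D := by
  unfold traceOmega; split <;> norm_num

lemma omegaD_eq : omegaD D = traceOmega D + theta D := by
  unfold omegaD theta omegaD' traceOmega; split <;> push_cast <;> ring

lemma sqrtDisc_eq : sqrtDisc D = 2 * theta D + traceOmega D := by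
  unfold sqrtDisc theta omegaD' traceOmega disc
  split
  · ring
  · push_cast
    rw [Real.sqrt_mul (by norm_num), show (4 : ℝ) = 2 ^ 2 by norm_num,
      Real.sqrt_sq (by norm_num)]
    ring

lemma one_lt_sqrt (hD : 2 ≤ D) : 1 < Real.sqrt D := by
  rw [Real.lt_sqrt zero_le_one]
  exact_mod_cast (by omega : 1 < D)

lemma theta_pos (hD : 2 ≤ D) : 0 < theta D := by
  have := one_lt_sqrt hD
  unfold theta omegaD'
  split <;> linarith

lemma sqrtDisc_pos (hD : 2 ≤ D) : 0 < sqrtDisc D := by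
  have := theta_pos hD
  rw [sqrtDisc_eq]
  linarith [traceOmega_nonneg (D := D)]

lemma irrational_theta (hD : ¬ IsSquare D) : Irrational (theta D) := by
  have h := irrational_sqrt_natCast_iff.mpr hD
  unfold theta omegaD'
  split
  · convert (h.sub_ratCast 1).div_natCast (m := 2) (by norm_num) using 1
    push_cast; ring
  · simpa using h

end Constants

section Embeddings

@[simp] lemma emb1_add (a b : OK) : emb1 D (a + b) = emb1 D a + emb1 D b := by
  simp only [emb1, Prod.fst_add, Prod.snd_add]; push_cast; ring

@[simp] lemma emb2_add (a b : OK) : emb2 D (a + b) = emb2 D a + emb2 D b := by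
  simp only [emb2, Prod.fst_add, Prod.snd_add]; push_cast; ring

@[simp] lemma emb1_sub (a b : OK) : emb1 D (a - b) = emb1 D a - emb1 D b := by
  simp only [emb1, Prod.fst_sub, Prod.snd_sub]; push_cast; ring

@[simp] lemma emb2_sub (a b : OK) : emb2 D (a - b) = emb2 D a - emb2 D b := by
  simp only [emb2, Prod.fst_sub, Prod.snd_sub]; push_cast; ring

@[simp] lemma emb1_zsmul (n : ℤ) (a : OK) : emb1 D (n • a) = n * emb1 D a := by
  simp only [emb1, Prod.smul_fst, Prod.smul_snd, smul_eq_mul]; push_cast; ring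

@[simp] lemma emb2_zsmul (n : ℤ) (a : OK) : emb2 D (n • a) = n * emb2 D a := by
  simp only [emb2, Prod.smul_fst, Prod.smul_snd, smul_eq_mul]; push_cast; ring

@[simp] lemma emb1_nsmul (n : ℕ) (a : OK) : emb1 D (n • a) = n * emb1 D a := by
  simpa using emb1_zsmul (n : ℤ) a

@[simp] lemma emb2_nsmul (n : ℕ) (a : OK) : emb2 D (n • a) = n * emb2 D a := by
  simpa using emb2_zsmul (n : ℤ) a

@[simp] lemma emb1_one : emb1 D (1, 0) = 1 := by simp [emb1]

@[simp] lemma emb2_one : emb2 D (1, 0) = 1 := by simp [emb2]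

lemma emb1_eq (a : OK) : emb1 D a = a.1 + a.2 * (traceOmega D + theta D) := by
  rw [emb1, omegaD_eq]

lemma emb2_eq (a : OK) : emb2 D a = a.1 - a.2 * theta D := by
  rw [emb2, theta]; ring

lemma emb1_sub_emb2 (a : OK) : emb1 D a - emb2 D a = a.2 * sqrtDisc D := by
  rw [emb1_eq, emb2_eq, sqrtDisc_eq]; ring

lemma emb_det (a b : OK) :
    emb1 D a * emb2 D b - emb2 D a * emb1 D b =
      ((a.2 * b.1 - a.1 * b.2 : ℤ) : ℝ) * sqrtDisc D := by
  rw [emb1_eq, emb1_eq, emb2_eq, emb2_eq, sqrtDisc_eq]; push_cast; ring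

lemma eq_zero_of_emb2_eq_zero (hD : ¬ IsSquare D) {a : OK} (h : emb2 D a = 0) : a = 0 := by
  rw [emb2_eq] at h
  by_cases h2 : a.2 = 0
  · simp only [h2, Int.cast_zero, zero_mul, sub_zero, Int.cast_eq_zero] at h
    exact Prod.ext h h2
  · refine absurd ⟨a.1 / a.2, ?_⟩ (irrational_theta hD)
    push_cast
    rw [div_eq_iff (by exact_mod_cast h2)]
    linarith

lemma intNorm_cast (a : OK) : (intNorm D a : ℝ) = Nm D a := by
  have hs : Real.sqrt D * Real.sqrt D = D := Real.mul_self_sqrt (Nat.cast_nonneg D)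
  unfold intNorm Nm emb1 emb2 omegaD omegaD' traceOmega
  split_ifs with h4
  · obtain ⟨k, hk⟩ : (4 : ℤ) ∣ (D : ℤ) - 1 := by omega
    rw [hk, Int.mul_ediv_cancel_left _ (by norm_num)]
    have hkr : (D : ℝ) - 1 = 4 * k := by exact_mod_cast hk
    push_cast
    linear_combination ((a.2 : ℝ) ^ 2 / 4) * hs + ((a.2 : ℝ) ^ 2 / 4) * hkr
  · push_cast
    linear_combination ((a.2 : ℝ) ^ 2) * hs

lemma one_le_Nm {a : OK} (ha : TotPos D a) : 1 ≤ Nm D a := by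
  have hpos : (0 : ℝ) < intNorm D a := by rw [intNorm_cast]; exact mul_pos ha.1 ha.2
  rw [← intNorm_cast]
  exact_mod_cast (Int.cast_pos.mp hpos : 0 < intNorm D a)

lemma Nm_le_neg_one {a : OK} (h1 : 0 < emb1 D a) (h2 : emb2 D a < 0) : Nm D a ≤ -1 := by
  have hneg : (intNorm D a : ℝ) < 0 := by rw [intNorm_cast]; exact mul_neg_of_pos_of_neg h1 h2
  have h : intNorm D a ≤ -1 := Int.le_sub_one_of_lt (Int.cast_lt_zero.mp hneg)
  rw [← intNorm_cast]
  exact_mod_cast h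

end Embeddings

lemma pKI_eq_ncard_partitions (D : ℕ) (α : OK) :
    pKI D α = (partitions (Indec D) α).ncard := rfl

/-- Two consecutive indecomposables `β_j, β_{j+1}`; `det` says that they form a `ℤ`-basis. -/
structure IsConsecutive (D : ℕ) (β γ : OK) : Prop where
  totPos_left : TotPos D β
  totPos_right : TotPos D γ
  emb1_lt : emb1 D β < emb1 D γ
  emb2_lt : emb2 D γ < emb2 D β
  det : β.1 * γ.2 - β.2 * γ.1 = 1

def nextCoeff (D : ℕ) (β γ : OK) : ℕ := ⌈emb2 D β / emb2 D γ⌉₊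

def next (D : ℕ) (β γ : OK) : OK := nextCoeff D β γ • γ - β

lemma nextCoeff_smul (β γ : OK) : nextCoeff D β γ • γ = β + next D β γ := by
  rw [next, add_sub_cancel]

namespace IsConsecutive

variable {β γ : OK}

lemma emb_det (h : IsConsecutive D β γ) :
    emb1 D β * emb2 D γ - emb2 D β * emb1 D γ = -sqrtDisc D := by
  rw [QuadraticIndecomposables.emb_det, show β.2 * γ.1 - β.1 * γ.2 = -1 by linarith [h.det]]
  simp

lemma exists_coords (h : IsConsecutive D β γ) (τ : OK) :
    ∃ x y : ℤ, τ = x • β + y • γ :=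
  ⟨γ.2 * τ.1 - γ.1 * τ.2, β.1 * τ.2 - β.2 * τ.1, by
    ext <;> simp only [Prod.fst_add, Prod.snd_add, Prod.smul_fst, Prod.smul_snd, smul_eq_mul]
    · linear_combination (-τ.1) * h.det
    · linear_combination (-τ.2) * h.det⟩

lemma indec_right (h : IsConsecutive D β γ) : Indec D γ := by
  refine ⟨h.totPos_right, ?_⟩
  rintro ⟨τ, ρ, hτ, hρ, hsum⟩
  obtain ⟨x, y, rfl⟩ := h.exists_coords τ
  have e1 := congrArg (emb1 D) hsum
  have e2 := congrArg (emb2 D) hsum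
  obtain ⟨hτ1, hτ2⟩ := hτ
  simp only [emb1_add, emb2_add, emb1_zsmul, emb2_zsmul] at e1 e2 hτ1 hτ2
  refine lattice_point_not_mem_box (s := x + y) (y := y) h.totPos_left.1 h.totPos_left.2
    h.emb1_lt h.emb2_lt ?_ ?_ ?_ ?_ <;> push_cast <;> linarith [hρ.1, hρ.2]

/-- `β₂ / γ₂` is never an integer, so `next` lands strictly inside `(0, γ₂)`. -/
lemma nextCoeff_spec (hD : ¬ IsSquare D) (h : IsConsecutive D β γ) :
    ((nextCoeff D β γ : ℝ) - 1) * emb2 D γ < emb2 D β ∧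
      emb2 D β < nextCoeff D β γ * emb2 D γ := by
  have hγ := h.totPos_right.2
  have hr : 0 ≤ emb2 D β / emb2 D γ := div_nonneg h.totPos_left.2.le hγ.le
  constructor
  · have := Nat.ceil_lt_add_one hr
    exact (lt_div_iff₀ hγ).mp (by rw [nextCoeff]; linarith)
  · refine (div_lt_iff₀ hγ).mp (lt_of_le_of_ne (Nat.le_ceil _) fun heq => ?_)
    have h0 : emb2 D (β - nextCoeff D β γ • γ) = 0 := by
      rw [emb2_sub, emb2_nsmul, ← heq, div_mul_cancel₀ _ hγ.ne', sub_self]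
    have hβ := sub_eq_zero.mp (eq_zero_of_emb2_eq_zero hD h0)
    have := h.det
    rw [hβ] at this
    simp only [Prod.smul_fst, Prod.smul_snd] at this
    simp only [nsmul_eq_mul] at this
    linarith

lemma two_le_nextCoeff (hD : ¬ IsSquare D) (h : IsConsecutive D β γ) :
    2 ≤ nextCoeff D β γ := by
  have hlt : (1 : ℝ) < nextCoeff D β γ := by
    have := (h.nextCoeff_spec hD).2
    nlinarith [h.emb2_lt, h.totPos_right.2]
  exact_mod_cast hlt

lemma isConsecutive_next (hD : ¬ IsSquare D) (h : IsConsecutive D β γ) :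
    IsConsecutive D γ (next D β γ) := by
  have hw : (2 : ℝ) ≤ nextCoeff D β γ := by exact_mod_cast h.two_le_nextCoeff hD
  obtain ⟨hlo, hhi⟩ := h.nextCoeff_spec hD
  have hβ := h.totPos_left
  have hγ := h.totPos_right
  have h1 : emb1 D γ < emb1 D (next D β γ) := by
    rw [next, emb1_sub, emb1_nsmul]
    nlinarith [h.emb1_lt, mul_le_mul_of_nonneg_right hw hγ.1.le]
  refine ⟨hγ, ⟨hγ.1.trans h1, ?_⟩, h1, ?_, ?_⟩
  · rw [next, emb2_sub, emb2_nsmul]; linarith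
  · rw [next, emb2_sub, emb2_nsmul]; linarith
  · simp only [next, Prod.fst_sub, Prod.snd_sub, Prod.smul_fst,
      Prod.smul_snd]
    simp only [nsmul_eq_mul]
    linear_combination h.det

/-- The Dress–Scharlau bound: `Nm(γ - β) ≤ -1` and
`4 (-Nm(γ - β)) Nm γ = Δ - (β₁ E₂ + β₂ E₁ + 2 E₁ E₂)²` with `E = γ - β`. -/
lemma Nm_right_le (h : IsConsecutive D β γ) : Nm D γ ≤ sqrtDisc D ^ 2 / 4 := by
  set E1 := emb1 D γ - emb1 D β
  set E2 := emb2 D γ - emb2 D β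
  have hE : E1 * E2 ≤ -1 := by
    have := Nm_le_neg_one (D := D) (a := γ - β)
      (by simpa using h.emb1_lt) (by simpa using h.emb2_lt)
    simpa [Nm] using this
  have hkey : 4 * -(E1 * E2) * Nm D γ =
      sqrtDisc D ^ 2 - (emb1 D β * E2 + emb2 D β * E1 + 2 * (E1 * E2)) ^ 2 := by
    have hdet := h.emb_det
    unfold Nm
    linear_combination (emb1 D β * E2 - emb2 D β * E1 - sqrtDisc D) * hdet
  have hN : 0 < Nm D γ := mul_pos h.totPos_right.1 h.totPos_right.2
  nlinarith [sq_nonneg (emb1 D β * E2 + emb2 D β * E1 + 2 * (E1 * E2))]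

lemma nextCoeff_sq_mul_Nm_lt (hD : ¬ IsSquare D) (h : IsConsecutive D β γ)
    (hβ : Nm D β ≤ sqrtDisc D ^ 2 / 4) :
    (nextCoeff D β γ : ℝ) ^ 2 * Nm D γ < sqrtDisc D ^ 2 + nextCoeff D β γ * sqrtDisc D := by
  set w : ℝ := (nextCoeff D β γ : ℝ)
  set δ := next D β γ
  have hδ := h.isConsecutive_next hD
  have e1 : w * emb1 D γ = emb1 D β + emb1 D δ := by
    simpa only [emb1_add, emb1_nsmul] using congrArg (emb1 D) (nextCoeff_smul (D := D) β γ)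
  have e2 : w * emb2 D γ = emb2 D β + emb2 D δ := by
    simpa only [emb2_add, emb2_nsmul] using congrArg (emb2 D) (nextCoeff_smul (D := D) β γ)
  have hdet := hδ.emb_det
  have hsplit :
      w ^ 2 * Nm D γ = Nm D β + Nm D δ + 2 * (emb1 D β * emb2 D δ) + w * sqrtDisc D := by
    unfold Nm
    linear_combination
      (emb2 D β + 2 * emb2 D δ) * e1 + (w * emb1 D γ - emb1 D δ) * e2 - w * hdet
  have hcross : emb1 D β * emb2 D δ < Nm D γ := by
    unfold Nm
    nlinarith [h.totPos_left.1, hδ.totPos_right.2, h.emb1_lt, hδ.emb2_lt, h.totPos_right.2]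
  linarith [h.Nm_right_le, hδ.Nm_right_le]

lemma nextCoeff_lt (hD : ¬ IsSquare D) (h : IsConsecutive D β γ)
    (hβ : Nm D β ≤ sqrtDisc D ^ 2 / 4) : (nextCoeff D β γ : ℝ) < 2 * sqrtDisc D := by
  have hw := h.nextCoeff_sq_mul_Nm_lt hD hβ
  have hN := one_le_Nm h.totPos_right
  have hR := sqrtDisc_pos (two_le_of_not_isSquare hD)
  by_contra! hle
  nlinarith

end IsConsecutive

section Conjugation

lemma conjOK_eq (a : OK) : conjOK D a = (a.1 + traceOmega D * a.2, -a.2) := rfl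

@[simp] lemma emb1_conjOK (a : OK) : emb1 D (conjOK D a) = emb2 D a := by
  rw [conjOK_eq, emb1_eq, emb2_eq]; push_cast; ring

@[simp] lemma emb2_conjOK (a : OK) : emb2 D (conjOK D a) = emb1 D a := by
  rw [conjOK_eq, emb1_eq, emb2_eq]; push_cast; ring

@[simp] lemma conjOK_conjOK (a : OK) : conjOK D (conjOK D a) = a := by
  simp only [conjOK_eq, neg_neg, mul_neg, add_neg_cancel_right]

def conjAddEquiv (D : ℕ) : OK ≃+ OK where
  toFun := conjOK D
  invFun := conjOK D
  left_inv := conjOK_conjOK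
  right_inv := conjOK_conjOK
  map_add' a b := by
    simp only [conjOK_eq, Prod.fst_add, Prod.snd_add, Prod.mk_add_mk, Prod.mk.injEq]
    constructor <;> ring

@[simp] lemma conjAddEquiv_apply (a : OK) : conjAddEquiv D a = conjOK D a := rfl

lemma Nm_conjOK (a : OK) : Nm D (conjOK D a) = Nm D a := by
  simp [Nm, mul_comm]

lemma totPos_conjOK {a : OK} (h : TotPos D a) : TotPos D (conjOK D a) := by
  simpa [TotPos, and_comm] using h

lemma indec_conjOK {a : OK} (h : Indec D a) : Indec D (conjOK D a) := by
  refine ⟨totPos_conjOK h.1, ?_⟩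
  rintro ⟨b, c, hb, hc, he⟩
  refine h.2 ⟨conjOK D b, conjOK D c, totPos_conjOK hb, totPos_conjOK hc, ?_⟩
  have := congrArg (conjAddEquiv D) he
  rwa [map_add, conjAddEquiv_apply, conjAddEquiv_apply, conjAddEquiv_apply,
    conjOK_conjOK] at this

lemma pKI_conjOK (α : OK) : pKI D (conjOK D α) = pKI D α := by
  have hmem {α : OK} {s : Multiset OK} (hs : s ∈ partitions (Indec D) α) :
      s.map (conjAddEquiv D) ∈ partitions (Indec D) (conjOK D α) :=
    map_mem_partitions (conjAddEquiv D).toAddMonoidHom (fun _ => indec_conjOK) hs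
  have hinv (s : Multiset OK) : (s.map (conjAddEquiv D)).map (conjAddEquiv D) = s := by
    simp [Multiset.map_map, Function.comp_def]
  rw [pKI_eq_ncard_partitions, pKI_eq_ncard_partitions,
    ← Set.ncard_image_of_injective _ (Multiset.map_injective (conjAddEquiv D).injective)]
  congr 1
  refine Set.Subset.antisymm ?_ fun s hs => ⟨_, hmem hs, hinv s⟩
  rintro _ ⟨s, hs, rfl⟩
  simpa using hmem hs

lemma IsConsecutive.conjOK_swap {β γ : OK} (h : IsConsecutive D β γ) :
    IsConsecutive D (conjOK D γ) (conjOK D β) where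
  totPos_left := totPos_conjOK h.totPos_right
  totPos_right := totPos_conjOK h.totPos_left
  emb1_lt := by simpa using h.emb2_lt
  emb2_lt := by simpa using h.emb1_lt
  det := by simp only [conjOK_eq]; linear_combination h.det

end Conjugation

/-- The first term `⌈θ⌉ + t - ω` is the conjugate of `⌈θ⌉ + ω`, the indecomposable that
follows `1`. -/
def indecSeq (D : ℕ) : ℕ → OK
  | 0 => (⌈theta D⌉ + traceOmega D, -1)
  | 1 => (1, 0)
  | n + 2 => next D (indecSeq D n) (indecSeq D (n + 1))

lemma isConsecutive_indecSeq_zero (hD : ¬ IsSquare D) :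
    IsConsecutive D (indecSeq D 0) (1, 0) := by
  have hlt : theta D < ⌈theta D⌉ := lt_of_le_of_ne (Int.le_ceil _) fun h =>
    irrational_theta hD ⟨⌈theta D⌉, by rw [Rat.cast_intCast]; exact h.symm⟩
  have hceil : (⌈theta D⌉ : ℝ) < theta D + 1 := Int.ceil_lt_add_one _
  have hθ := theta_pos (two_le_of_not_isSquare hD)
  have ht := traceOmega_nonneg (D := D)
  have hc : (1 : ℝ) ≤ ⌈theta D⌉ := by exact_mod_cast Int.ceil_pos.mpr hθ
  have e1 : emb1 D (indecSeq D 0) = ⌈theta D⌉ - theta D := by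
    rw [indecSeq, emb1_eq]; push_cast; ring
  have e2 : emb2 D (indecSeq D 0) = ⌈theta D⌉ + traceOmega D + theta D := by
    rw [indecSeq, emb2_eq]; push_cast; ring
  exact ⟨⟨by rw [e1]; linarith, by rw [e2]; linarith⟩, ⟨by simp, by simp⟩,
    by rw [e1, emb1_one]; linarith, by rw [e2, emb2_one]; linarith, by simp [indecSeq]⟩

lemma isConsecutive_indecSeq (hD : ¬ IsSquare D) :
    ∀ n, IsConsecutive D (indecSeq D n) (indecSeq D (n + 1))
  | 0 => isConsecutive_indecSeq_zero hD
  | n + 1 => (isConsecutive_indecSeq hD n).isConsecutive_next hD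

lemma indec_indecSeq (hD : ¬ IsSquare D) : ∀ n, Indec D (indecSeq D n)
  | 0 => by
    simpa using indec_conjOK ((isConsecutive_indecSeq_zero hD).conjOK_swap.indec_right)
  | n + 1 => (isConsecutive_indecSeq hD n).indec_right

lemma Nm_indecSeq_le (hD : ¬ IsSquare D) : ∀ n, Nm D (indecSeq D n) ≤ sqrtDisc D ^ 2 / 4
  | 0 => by simpa [Nm_conjOK] using (isConsecutive_indecSeq_zero hD).conjOK_swap.Nm_right_le
  | n + 1 => (isConsecutive_indecSeq hD n).Nm_right_le

lemma nextCoeff_smul_indecSeq (n : ℕ) :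
    nextCoeff D (indecSeq D n) (indecSeq D (n + 1)) • indecSeq D (n + 1) =
      indecSeq D n + indecSeq D (n + 2) :=
  nextCoeff_smul _ _

lemma strictMono_emb1_indecSeq (hD : ¬ IsSquare D) :
    StrictMono fun n => emb1 D (indecSeq D n) :=
  strictMono_nat_of_lt_succ fun n => (isConsecutive_indecSeq hD n).emb1_lt

lemma indecSeq_injective (hD : ¬ IsSquare D) : Function.Injective (indecSeq D) :=
  fun _ _ h => (strictMono_emb1_indecSeq hD).injective (congrArg (emb1 D) h)

lemma emb2_indecSeq_succ_le_one (hD : ¬ IsSquare D) : ∀ n, emb2 D (indecSeq D (n + 1)) ≤ 1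
  | 0 => by simp [indecSeq]
  | n + 1 =>
    (isConsecutive_indecSeq hD (n + 1)).emb2_lt.le.trans (emb2_indecSeq_succ_le_one hD n)

/-- The gaps `emb1 β_{n+1} - emb1 β_n` never shrink, since `β_{n+2} = w β_{n+1} - β_n` with
`w ≥ 2`; so `emb1 β_n` grows at least linearly. -/
lemma exists_lt_emb1_indecSeq (hD : ¬ IsSquare D) (r : ℝ) :
    ∃ n, r < emb1 D (indecSeq D n) := by
  set d := emb1 D (indecSeq D 1) - emb1 D (indecSeq D 0)
  have hgap : ∀ n, d ≤ emb1 D (indecSeq D (n + 1)) - emb1 D (indecSeq D n) := by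
    intro n
    induction n with
    | zero => rfl
    | succ n ih =>
      have h := isConsecutive_indecSeq hD n
      have hw : (2 : ℝ) ≤ nextCoeff D (indecSeq D n) (indecSeq D (n + 1)) := by
        exact_mod_cast h.two_le_nextCoeff hD
      have e : emb1 D (indecSeq D (n + 2)) = nextCoeff D (indecSeq D n) (indecSeq D (n + 1)) *
          emb1 D (indecSeq D (n + 1)) - emb1 D (indecSeq D n) := by
        simp only [indecSeq, next, emb1_sub, emb1_nsmul]
      rw [e]
      nlinarith [h.totPos_right.1]
  have hlin : ∀ n : ℕ, n * d ≤ emb1 D (indecSeq D n) := by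
    intro n
    induction n with
    | zero => simpa using (isConsecutive_indecSeq hD 0).totPos_left.1.le
    | succ n ih => push_cast; linarith [hgap n]
  have hd : 0 < d := sub_pos.mpr (isConsecutive_indecSeq hD 0).emb1_lt
  obtain ⟨n, hn⟩ := exists_nat_gt (r / d)
  exact ⟨n, ((div_lt_iff₀ hd).mp hn).trans_le (hlin n)⟩

lemma exists_eq_nsmul_add_nsmul (hD : ¬ IsSquare D) {α : OK} (hα : TotPos D α)
    (hy : 0 ≤ α.2) : ∃ i a b : ℕ, α = a • indecSeq D (i + 1) + b • indecSeq D (i + 2) := by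
  let g (n : ℕ) :=
    emb1 D α * emb2 D (indecSeq D (n + 1)) - emb2 D α * emb1 D (indecSeq D (n + 1))
  have hg0 : 0 ≤ g 0 := by
    have := emb1_sub_emb2 (D := D) α
    have := sqrtDisc_pos (two_le_of_not_isSquare hD)
    simp only [g, indecSeq, emb1_one, emb2_one, mul_one]
    nlinarith [(by exact_mod_cast hy : (0 : ℝ) ≤ α.2)]
  obtain ⟨N, hN⟩ := exists_lt_emb1_indecSeq hD (emb1 D α / emb2 D α)
  have hgN : ¬ 0 ≤ g N := by
    have h1 := (strictMono_emb1_indecSeq hD) (Nat.lt_succ_self N)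
    have h2 := emb2_indecSeq_succ_le_one hD N
    have h3 := (div_lt_iff₀' hα.2).mp (hN.trans h1)
    simp only [g, not_le]
    nlinarith [hα.1]
  obtain ⟨i, hi, hi1⟩ := Nat.exists_and_not_succ (P := fun n => 0 ≤ g n) hg0 hgN
  have h := isConsecutive_indecSeq hD (i + 1)
  obtain ⟨x, y, rfl⟩ := h.exists_coords α
  have hR := sqrtDisc_pos (two_le_of_not_isSquare hD)
  have hdet := h.emb_det
  have hx : 0 ≤ x := by
    have : 0 < (x : ℝ) * sqrtDisc D := by
      simp only [g, emb1_add, emb2_add, emb1_zsmul, emb2_zsmul, not_le] at hi1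
      linear_combination hi1 - x * hdet
    exact_mod_cast (pos_of_mul_pos_left this hR.le).le
  have hy : 0 ≤ y := by
    have : 0 ≤ (y : ℝ) * sqrtDisc D := by
      simp only [g, emb1_add, emb2_add, emb1_zsmul, emb2_zsmul] at hi
      linear_combination hi - y * hdet
    exact_mod_cast nonneg_of_mul_nonneg_left this hR
  refine ⟨i, x.toNat, y.toNat, ?_⟩
  rw [← natCast_zsmul, ← natCast_zsmul, Int.toNat_of_nonneg hx, Int.toNat_of_nonneg hy]

lemma Nm_nsmul_add_nsmul_lt (hD : ¬ IsSquare D) {π β γ : OK} (hπβ : IsConsecutive D π β)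
    (hβγ : IsConsecutive D β γ) (hπ : Nm D π ≤ sqrtDisc D ^ 2 / 4) {a b : ℕ}
    (ha : a < 2 * nextCoeff D π β) (hb : b < 2 * nextCoeff D β γ)
    (hab : a < nextCoeff D π β ∨ b < nextCoeff D β γ) :
    Nm D (a • β + b • γ) < 5 * sqrtDisc D * (sqrtDisc D + 1) * (3 * sqrtDisc D + 2) := by
  set R := sqrtDisc D
  have hR : 0 < R := sqrtDisc_pos (two_le_of_not_isSquare hD)
  have hβ := hπβ.Nm_right_le
  have hvb := hπβ.nextCoeff_sq_mul_Nm_lt hD hπ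
  have hvb' := hπβ.nextCoeff_lt hD hπ
  have hvg := hβγ.nextCoeff_sq_mul_Nm_lt hD hβ
  have hvg' := hβγ.nextCoeff_lt hD hβ
  set X := emb1 D β * emb2 D γ
  have hdet := hβγ.emb_det
  have hNm : Nm D (a • β + b • γ) =
      (a : ℝ) ^ 2 * Nm D β + a * b * (2 * X + R) + (b : ℝ) ^ 2 * Nm D γ := by
    simp only [Nm, emb1_add, emb2_add, emb1_nsmul, emb2_nsmul]
    linear_combination (-(a : ℝ) * b) * hdet
  have hX : 0 ≤ X := (mul_pos hβγ.totPos_left.1 hβγ.totPos_right.2).le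
  have hXN : X ^ 2 ≤ Nm D β * Nm D γ := by
    have : Nm D β * Nm D γ = X * (X + R) := by unfold Nm; linear_combination (-X) * hdet
    nlinarith
  rw [hNm]
  refine (quadratic_le_of_exchange_bounds hR (Nat.cast_nonneg a) (Nat.cast_nonneg b)
    hvb'.le hvg'.le (zero_le_one.trans (one_le_Nm hβγ.totPos_left))
    (zero_le_one.trans (one_le_Nm hβγ.totPos_right)) hX hXN (by nlinarith)
    (by nlinarith) (by exact_mod_cast ha.le) (by exact_mod_cast hb.le)
    (hab.imp (fun h => by exact_mod_cast h.le) (fun h => by exact_mod_cast h.le))).trans_lt ?_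
  nlinarith [mul_pos hR (mul_pos hR hR)]

end QuadraticIndecomposables

open QuadraticIndecomposables in
/-- norm bound for elements with exactly two representations
as sums of indecomposables. -/
theorem stmt12 (D : ℕ) (hD : 2 ≤ D) (hsq : Squarefree D)
    (α : OK) (hα : TotPos D α) (h : pKI D α = 2) :
    Nm D α < 5 * Real.sqrt (disc D) * (Real.sqrt (disc D) + 1) *
      (3 * Real.sqrt (disc D) + 2) := by
  wlog hy : 0 ≤ α.2 generalizing α
  · simpa only [Nm_conjOK] using this (conjOK D α) (totPos_conjOK hα) (by rwa [pKI_conjOK])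
      (by simp only [conjOK_eq]; omega)
  have hD' := not_isSquare_of_squarefree hD hsq
  obtain ⟨i, a, b, rfl⟩ := exists_eq_nsmul_add_nsmul hD' hα hy
  have h2 :
      (partitions (Indec D) (a • indecSeq D (i + 1) + b • indecSeq D (i + 2))).encard ≤ 2 := by
    rw [pKI_eq_ncard_partitions] at h
    rw [← (Set.finite_of_ncard_ne_zero (by omega)).cast_ncard_eq, h]
    rfl
  obtain ⟨ha, hb, hab⟩ := lt_of_encard_partitions_le_two (indecSeq_injective hD')
    (indec_indecSeq hD') (v := fun j => nextCoeff D (indecSeq D j) (indecSeq D (j + 1)))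
    nextCoeff_smul_indecSeq h2
  exact Nm_nsmul_add_nsmul_lt hD' (isConsecutive_indecSeq hD' i)
    (isConsecutive_indecSeq hD' (i + 1)) (Nm_indecSeq_le hD' i) ha hb hab
end
end

section
/- Let K = ℚ(√D) with D ≥ 2 squarefree, and let α ∈ O_K^+ be written uniquely as α = eβ_j + fβ_{j+1} with e ≥ 1, f ≥ 0, where (β_j) is the ordered sequence of indecomposables. If the total number of partitions of α into totally positive parts satisfies p_K(α) ≤ 6, then (e, f) ∈ {(1,0), (2,0), (3,0), (4,0), (1,1), (2,1), (1,2)}. -/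
noncomputable section

namespace Stmt13Aux

/-- `emb1` as an additive hom. -/
def e1hom (D : ℕ) : OK →+ ℝ where
  toFun := emb1 D
  map_zero' := by simp [emb1]
  map_add' a b := by simp only [emb1, Prod.fst_add, Prod.snd_add]; push_cast; ring

/-- `emb2` as an additive hom. -/
def e2hom (D : ℕ) : OK →+ ℝ where
  toFun := emb2 D
  map_zero' := by simp [emb2]
  map_add' a b := by simp only [emb2, Prod.fst_add, Prod.snd_add]; push_cast; ring

/-- The trace as an additive hom to `ℤ`. -/
def trhom (D : ℕ) : OK →+ ℤ where
  toFun a := 2 * a.1 + (if D % 4 = 1 then 1 else 0) * a.2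
  map_zero' := by simp
  map_add' a b := by simp only [Prod.fst_add, Prod.snd_add]; ring

lemma tr_eq (D : ℕ) (a : OK) : ((trhom D a : ℤ) : ℝ) = emb1 D a + emb2 D a := by
  simp only [trhom, emb1, emb2, omegaD, omegaD', AddMonoidHom.coe_mk, ZeroHom.coe_mk]
  split <;> push_cast <;> ring

lemma emb1_comb (D : ℕ) (a b : ℤ) (x y : OK) :
    emb1 D (a • x + b • y) = a * emb1 D x + b * emb1 D y := by
  simp only [emb1, Prod.fst_add, Prod.snd_add, Prod.smul_fst, Prod.smul_snd, smul_eq_mul]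
  push_cast; ring

lemma emb2_comb (D : ℕ) (a b : ℤ) (x y : OK) :
    emb2 D (a • x + b • y) = a * emb2 D x + b * emb2 D y := by
  simp only [emb2, Prod.fst_add, Prod.snd_add, Prod.smul_fst, Prod.smul_snd, smul_eq_mul]
  push_cast; ring

lemma emb1_sub (D : ℕ) (x y : OK) : emb1 D (x - y) = emb1 D x - emb1 D y := by
  simp only [emb1, Prod.fst_sub, Prod.snd_sub]; push_cast; ring

lemma emb2_sub (D : ℕ) (x y : OK) : emb2 D (x - y) = emb2 D x - emb2 D y := by
  simp only [emb2, Prod.fst_sub, Prod.snd_sub]; push_cast; ring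

/-- The map `(a,b) ↦ a•β + b•γ` as an additive hom. -/
def Lhom (β γ : OK) : (ℤ × ℤ) →+ OK where
  toFun p := p.1 • β + p.2 • γ
  map_zero' := by simp
  map_add' p q := by
    simp only [Prod.fst_add, Prod.snd_add, add_smul]; abel

lemma totpos_comb {D : ℕ} {β γ : OK} (hb : TotPos D β) (hg : TotPos D γ)
    {a b : ℤ} (ha : 0 ≤ a) (hb' : 0 ≤ b) (hne : ¬(a = 0 ∧ b = 0)) :
    TotPos D (a • β + b • γ) := by
  obtain ⟨h1, h2⟩ := hb; obtain ⟨h3, h4⟩ := hg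
  have hc : 0 < a ∨ 0 < b := by omega
  constructor
  · rw [emb1_comb]
    rcases hc with hc | hc
    · have : (0:ℝ) < a := by exact_mod_cast hc
      have hbb : (0:ℝ) ≤ b := by exact_mod_cast hb'
      nlinarith
    · have : (0:ℝ) < b := by exact_mod_cast hc
      have haa : (0:ℝ) ≤ a := by exact_mod_cast ha
      nlinarith
  · rw [emb2_comb]
    rcases hc with hc | hc
    · have : (0:ℝ) < a := by exact_mod_cast hc
      have hbb : (0:ℝ) ≤ b := by exact_mod_cast hb'
      nlinarith
    · have : (0:ℝ) < b := by exact_mod_cast hc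
      have haa : (0:ℝ) ≤ a := by exact_mod_cast ha
      nlinarith

lemma L_inj {D : ℕ} {β γ : OK} (hb : TotPos D β) (hg : Indec D γ)
    (hlt : emb1 D β < emb1 D γ) : Function.Injective ⇑(Lhom β γ) := by
  have hker : ∀ p : ℤ × ℤ, Lhom β γ p = 0 → p = 0 := by
    rintro ⟨a, b⟩ hab
    have hr : 0 < emb1 D β := hb.1
    have hr' : 0 < emb2 D β := hb.2
    have ht' : 0 < emb2 D γ := hg.1.2
    have e1 : (a : ℝ) * emb1 D β + b * emb1 D γ = 0 := by
      have := congrArg (emb1 D) hab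
      rwa [show (Lhom β γ) (a, b) = a • β + b • γ from rfl, emb1_comb,
        show emb1 D 0 = 0 from by simp [emb1]] at this
    have e2 : (a : ℝ) * emb2 D β + b * emb2 D γ = 0 := by
      have := congrArg (emb2 D) hab
      rwa [show (Lhom β γ) (a, b) = a • β + b • γ from rfl, emb2_comb,
        show emb2 D 0 = 0 from by simp [emb2]] at this
    by_cases hb0 : b = 0
    · subst hb0
      simp only [Int.cast_zero, zero_mul, add_zero] at e1
      have : (a : ℝ) = 0 := by
        rcases mul_eq_zero.mp e1 with h | h
        · exact h
        · exact absurd h (ne_of_gt hr)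
      have : a = 0 := by exact_mod_cast this
      simp [this]
    · exfalso
      have hbR : (b : ℝ) ≠ 0 := by exact_mod_cast hb0
      have key : emb2 D β * emb1 D γ = emb1 D β * emb2 D γ := by
        have h0 : (b : ℝ) * (emb2 D β * emb1 D γ - emb1 D β * emb2 D γ) = 0 := by
          linear_combination emb2 D β * e1 - emb1 D β * e2
        have := mul_eq_zero.mp h0
        rcases this with h | h
        · exact absurd h hbR
        · linarith
      have hd2 : 0 < emb2 D γ - emb2 D β := by
        nlinarith [mul_pos hr' (sub_pos.mpr hlt)]
      exact hg.2 ⟨β, γ - β, hb, ⟨by rw [emb1_sub]; linarith, by rw [emb2_sub]; linarith⟩,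
        by abel⟩
  intro p q h
  have : Lhom β γ (p - q) = 0 := by rw [map_sub, h, sub_self]
  have := hker _ this
  have hp : p - q = 0 := this
  exact sub_eq_zero.mp hp

lemma sum_emb1_nonneg {D : ℕ} {t : Multiset OK} (h : ∀ x ∈ t, TotPos D x) :
    0 ≤ emb1 D t.sum := by
  rw [show emb1 D t.sum = e1hom D t.sum from rfl, map_multiset_sum]
  apply Multiset.sum_nonneg
  intro x hx
  obtain ⟨y, hy, rfl⟩ := Multiset.mem_map.mp hx
  exact (h y hy).1.le

lemma sum_emb2_nonneg {D : ℕ} {t : Multiset OK} (h : ∀ x ∈ t, TotPos D x) :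
    0 ≤ emb2 D t.sum := by
  rw [show emb2 D t.sum = e2hom D t.sum from rfl, map_multiset_sum]
  apply Multiset.sum_nonneg
  intro x hx
  obtain ⟨y, hy, rfl⟩ := Multiset.mem_map.mp hx
  exact (h y hy).2.le

lemma part_bounds {D : ℕ} {s : Multiset OK} {α x : OK}
    (hs : ∀ y ∈ s, TotPos D y) (hsum : s.sum = α) (hx : x ∈ s) :
    emb1 D x ≤ emb1 D α ∧ emb2 D x ≤ emb2 D α := by
  classical
  have h1 : x ::ₘ s.erase x = s := Multiset.cons_erase hx
  have hrest : ∀ y ∈ s.erase x, TotPos D y := fun y hy => hs y (Multiset.mem_of_mem_erase hy)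
  have hα : α = x + (s.erase x).sum := by
    rw [← hsum]
    nth_rewrite 1 [← h1]
    rw [Multiset.sum_cons]
  have e1a : emb1 D α = emb1 D x + emb1 D (s.erase x).sum := by
    rw [hα]; exact map_add (e1hom D) _ _
  have e2a : emb2 D α = emb2 D x + emb2 D (s.erase x).sum := by
    rw [hα]; exact map_add (e2hom D) _ _
  constructor
  · have := sum_emb1_nonneg hrest; linarith
  · have := sum_emb2_nonneg hrest; linarith

lemma finite_partitions (D : ℕ) (hD : 2 ≤ D) (α : OK) :
    {s : Multiset OK | (∀ x ∈ s, TotPos D x) ∧ s.sum = α}.Finite := by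
  classical
  have hDR : (0:ℝ) < (D:ℝ) := by
    have : 0 < D := by omega
    exact_mod_cast this
  have hs0 : (0:ℝ) < Real.sqrt D := Real.sqrt_pos.mpr hDR
  have hωd : Real.sqrt D ≤ omegaD D - omegaD' D := by
    unfold omegaD omegaD'
    split
    · apply le_of_eq; ring
    · linarith
  set C : ℝ := |emb1 D α| + |emb2 D α| + 1 with hC
  have hCpos : 0 < C := by positivity
  obtain ⟨M, hM⟩ := exists_nat_ge (2 * C / Real.sqrt D + (C + 2 * C / Real.sqrt D * |omegaD D|))
  have hb2 : (0:ℝ) ≤ 2 * C / Real.sqrt D := by positivity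
  have hb1 : (0:ℝ) ≤ C + 2 * C / Real.sqrt D * |omegaD D| := by positivity
  set N := (trhom D α).toNat with hN
  set box : Finset (ℤ × ℤ) := Finset.Icc (-(M:ℤ), -(M:ℤ)) ((M:ℤ), (M:ℤ)) with hbox
  apply Set.Finite.subset ((N • box.val).powerset.toFinset.finite_toSet)
  rintro s ⟨hall, hsum⟩
  simp only [Finset.mem_coe, Multiset.mem_toFinset, Multiset.mem_powerset]
  -- every part has trace ≥ 1
  have htr : ∀ x ∈ s, (1:ℤ) ≤ trhom D x := by
    intro x hx
    have hpos : (0:ℝ) < emb1 D x + emb2 D x := by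
      have := hall x hx; linarith [this.1, this.2]
    have : (0:ℝ) < ((trhom D x : ℤ) : ℝ) := by rw [tr_eq]; exact hpos
    have : (0:ℤ) < trhom D x := by exact_mod_cast this
    omega
  -- card bound
  have hcards : s.card ≤ N := by
    have h1 : (s.map (fun _ => (1:ℤ))).sum ≤ (s.map (trhom D)).sum :=
      Multiset.sum_map_le_sum_map _ _ htr
    have h2 : (s.map (fun _ => (1:ℤ))).sum = (s.card : ℤ) := by
      rw [Multiset.map_const', Multiset.sum_replicate]; simp
    have h3 : (s.map (trhom D)).sum = trhom D α := by
      rw [← map_multiset_sum, hsum]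
    rw [h2, h3] at h1
    omega
  -- box membership
  have hmem : ∀ x ∈ s, x ∈ box := by
    intro x hx
    have hxp := hall x hx
    obtain ⟨hle1, hle2⟩ := part_bounds hall hsum hx
    have hx1 : |emb1 D x| ≤ C := by
      rw [abs_of_pos hxp.1]
      have : emb1 D α ≤ |emb1 D α| := le_abs_self _
      have h0 : (0:ℝ) ≤ |emb2 D α| := abs_nonneg _
      linarith
    have hx2 : |emb2 D x| ≤ C := by
      rw [abs_of_pos hxp.2]
      have : emb2 D α ≤ |emb2 D α| := le_abs_self _
      have h0 : (0:ℝ) ≤ |emb1 D α| := abs_nonneg _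
      linarith
    have hy : (x.2 : ℝ) * (omegaD D - omegaD' D) = emb1 D x - emb2 D x := by
      unfold emb1 emb2; ring
    have hyabs : |(x.2 : ℝ)| ≤ 2 * C / Real.sqrt D := by
      rw [le_div_iff₀ hs0]
      calc |(x.2 : ℝ)| * Real.sqrt D ≤ |(x.2 : ℝ)| * (omegaD D - omegaD' D) := by
            exact mul_le_mul_of_nonneg_left hωd (abs_nonneg _)
        _ = |(x.2 : ℝ)| * |omegaD D - omegaD' D| := by
            rw [abs_of_pos (lt_of_lt_of_le hs0 hωd)]
        _ = |(x.2 : ℝ) * (omegaD D - omegaD' D)| := (abs_mul _ _).symm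
        _ = |emb1 D x - emb2 D x| := by rw [hy]
        _ ≤ |emb1 D x| + |emb2 D x| := abs_sub _ _
        _ ≤ 2 * C := by linarith
    have hxeq : (x.1 : ℝ) = emb1 D x - x.2 * omegaD D := by unfold emb1; ring
    have hxabs : |(x.1 : ℝ)| ≤ C + 2 * C / Real.sqrt D * |omegaD D| := by
      rw [hxeq]
      calc |emb1 D x - x.2 * omegaD D| ≤ |emb1 D x| + |(x.2:ℝ) * omegaD D| := abs_sub _ _
        _ = |emb1 D x| + |(x.2:ℝ)| * |omegaD D| := by rw [abs_mul]
        _ ≤ C + 2 * C / Real.sqrt D * |omegaD D| := by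
            have := abs_nonneg (omegaD D)
            have h5 := mul_le_mul_of_nonneg_right hyabs this
            linarith
    have hM1 : |(x.1 : ℝ)| ≤ (M : ℝ) := by linarith
    have hM2 : |(x.2 : ℝ)| ≤ (M : ℝ) := by linarith
    have hM1' : |x.1| ≤ (M : ℤ) := by exact_mod_cast (by push_cast; exact hM1 : |((x.1 : ℤ) : ℝ)| ≤ ((M:ℤ) : ℝ))
    have hM2' : |x.2| ≤ (M : ℤ) := by exact_mod_cast (by push_cast; exact hM2 : |((x.2 : ℤ) : ℝ)| ≤ ((M:ℤ) : ℝ))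
    rw [hbox, Finset.mem_Icc]
    rw [abs_le] at hM1' hM2'
    constructor
    · exact ⟨hM1'.1, hM2'.1⟩
    · exact ⟨hM1'.2, hM2'.2⟩
  -- conclude s ≤ N • box.val
  rw [Multiset.le_iff_count]
  intro a
  by_cases ha : a ∈ s
  · have h1 : Multiset.count a s ≤ s.card := Multiset.count_le_card a s
    have h2 : Multiset.count a box.val = 1 :=
      Multiset.count_eq_one_of_mem box.nodup (hmem a ha)
    rw [Multiset.count_nsmul, h2, mul_one]
    omega
  · rw [Multiset.count_eq_zero_of_notMem ha]
    exact Nat.zero_le _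

lemma seven_le (D : ℕ) (hD : 2 ≤ D) (β γ α : OK) (hb : TotPos D β) (hg : TotPos D γ)
    (hinj : Function.Injective ⇑(Lhom β γ))
    (A B : ℤ) (extraM : Multiset OK) (hex : ∀ x ∈ extraM, TotPos D x)
    (hsum : (A • β + B • γ) + extraM.sum = α)
    (ms : Finset (Multiset (ℤ × ℤ))) (hcard : 7 ≤ ms.card)
    (hms : ∀ m ∈ ms, (∀ p ∈ m, 0 ≤ p.1 ∧ 0 ≤ p.2 ∧ ¬(p.1 = 0 ∧ p.2 = 0)) ∧ m.sum = (A, B)) :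
    7 ≤ pK D α := by
  classical
  set S := {s : Multiset OK | (∀ x ∈ s, TotPos D x) ∧ s.sum = α} with hS
  have hfin : S.Finite := finite_partitions D hD α
  set F := fun m : Multiset (ℤ × ℤ) => m.map ⇑(Lhom β γ) + extraM with hF
  have hFinj : Function.Injective F := by
    intro m m' h
    exact Multiset.map_injective hinj (add_right_cancel h)
  have hsub : F '' ↑ms ⊆ S := by
    rintro _ ⟨m, hm, rfl⟩
    obtain ⟨hpos, hmsum⟩ := hms m hm
    constructor
    · intro x hxm
      rcases Multiset.mem_add.mp hxm with hx | hx
      · obtain ⟨p, hp, rfl⟩ := Multiset.mem_map.mp hx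
        obtain ⟨h1, h2, h3⟩ := hpos p hp
        exact totpos_comb hb hg h1 h2 h3
      · exact hex x hx
    · have : (m.map ⇑(Lhom β γ)).sum = A • β + B • γ := by
        rw [← map_multiset_sum, hmsum]; rfl
      rw [Multiset.sum_add, this, hsum]
  calc (7:ℕ) ≤ ms.card := hcard
    _ = (↑ms : Set (Multiset (ℤ × ℤ))).ncard := (Set.ncard_coe_finset ms).symm
    _ = (F '' ↑ms).ncard := (Set.ncard_image_of_injective _ hFinj).symm
    _ ≤ S.ncard := Set.ncard_le_ncard hsub hfin
    _ = pK D α := rfl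

lemma apply_case (D : ℕ) (hD : 2 ≤ D) (B G α : OK) (hbB : TotPos D B) (hgG : TotPos D G)
    (hinj : Function.Injective ⇑(Lhom B G)) (e f A B' : ℤ) (hA : A ≤ e) (hB : B' ≤ f)
    (heq : α = e • B + f • G)
    (ms : Finset (Multiset (ℤ × ℤ))) (hcard : 7 ≤ ms.card)
    (hms : ∀ m ∈ ms, (∀ p ∈ m, 0 ≤ p.1 ∧ 0 ≤ p.2 ∧ ¬(p.1 = 0 ∧ p.2 = 0)) ∧ m.sum = (A, B')) :
    7 ≤ pK D α := by
  rcases eq_or_ne (e, f) (A, B') with hef | hef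
  · have he' : e = A ∧ f = B' := Prod.mk.injEq .. ▸ by
      exact Prod.mk.injEq e f A B' ▸ (by rw [← Prod.mk.injEq]; exact hef)
    apply seven_le D hD B G α hbB hgG hinj A B' 0 (by simp)
      (by rw [Multiset.sum_zero, add_zero, heq, he'.1, he'.2]) ms hcard hms
  · have hne : ¬(e - A = 0 ∧ f - B' = 0) := by
      intro hcc
      exact hef (by rw [Prod.mk.injEq]; omega)
    apply seven_le D hD B G α hbB hgG hinj A B' {(e - A) • B + (f - B') • G}
      ?_ ?_ ms hcard hms
    · intro x hx
      rw [Multiset.mem_singleton] at hx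
      subst hx
      exact totpos_comb hbB hgG (by omega) (by omega) hne
    · rw [Multiset.sum_singleton, heq]
      module

end Stmt13Aux

/-- if `p_K(α) ≤ 6` then `(e,f)` is one of the seven listed pairs. -/
theorem stmt13 (D : ℕ) (hD : 2 ≤ D) (hsq : Squarefree D)
    (β : ℤ → OK) (v : ℤ → ℤ) (hβ : BetaSeq D β v)
    (α : OK) (hα : TotPos D α)
    (j e f : ℤ) (he : 1 ≤ e) (hf : 0 ≤ f)
    (heq : α = e • β j + f • β (j + 1))
    (h : pK D α ≤ 6) :
    (e, f) ∈ ({(1, 0), (2, 0), (3, 0), (4, 0), (1, 1), (2, 1), (1, 2)} : Set (ℤ × ℤ)) := by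
  by_contra hcon
  simp only [Set.mem_insert_iff, Set.mem_singleton_iff, Prod.mk.injEq, not_or] at hcon
  set B := β j with hB
  set G := β (j + 1) with hG
  have hbi := hβ.indec j
  have hgi := hβ.indec (j + 1)
  have hlt : emb1 D B < emb1 D G := hβ.mono (by omega : j < j + 1)
  have hinj : Function.Injective ⇑(Stmt13Aux.Lhom B G) := Stmt13Aux.L_inj hbi.1 hgi hlt
  have hcase : (f = 0 ∧ 5 ≤ e) ∨ (f = 1 ∧ 3 ≤ e) ∨ (f = 2 ∧ 2 ≤ e) ∨ (3 ≤ f ∧ 1 ≤ e) := by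
    omega
  have h7 : 7 ≤ pK D α := by
    rcases hcase with ⟨hf0, he5⟩ | ⟨hf1, he3⟩ | ⟨hf2, he2⟩ | ⟨hf3, he1⟩
    · exact Stmt13Aux.apply_case D hD B G α hbi.1 hgi.1 hinj e f 5 0 he5 (by omega) heq
        ({ {(5,0)}, {(4,0),(1,0)}, {(3,0),(2,0)}, {(3,0),(1,0),(1,0)},
           {(2,0),(2,0),(1,0)}, {(2,0),(1,0),(1,0),(1,0)},
           {(1,0),(1,0),(1,0),(1,0),(1,0)} } : Finset (Multiset (ℤ × ℤ)))
        (by decide) (by decide)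
    · exact Stmt13Aux.apply_case D hD B G α hbi.1 hgi.1 hinj e f 3 1 he3 (by omega) heq
        ({ {(3,1)}, {(2,1),(1,0)}, {(1,1),(2,0)}, {(1,1),(1,0),(1,0)},
           {(0,1),(3,0)}, {(0,1),(2,0),(1,0)}, {(0,1),(1,0),(1,0),(1,0)} }
           : Finset (Multiset (ℤ × ℤ)))
        (by decide) (by decide)
    · exact Stmt13Aux.apply_case D hD B G α hbi.1 hgi.1 hinj e f 2 2 he2 (by omega) heq
        ({ {(2,2)}, {(2,1),(0,1)}, {(1,2),(1,0)}, {(2,0),(0,2)}, {(1,1),(1,1)},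
           {(1,1),(1,0),(0,1)}, {(1,0),(1,0),(0,1),(0,1)} } : Finset (Multiset (ℤ × ℤ)))
        (by decide) (by decide)
    · exact Stmt13Aux.apply_case D hD B G α hbi.1 hgi.1 hinj e f 1 3 he1 hf3 heq
        ({ {(1,3)}, {(1,2),(0,1)}, {(1,1),(0,2)}, {(1,1),(0,1),(0,1)},
           {(1,0),(0,3)}, {(1,0),(0,2),(0,1)}, {(1,0),(0,1),(0,1),(0,1)} }
           : Finset (Multiset (ℤ × ℤ)))
        (by decide) (by decide)
  omega
end
end
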